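/- arXiv:1002.1633 — 9 statements merged into one kernel-verified Lean document; each statement's English description precedes it below -/
import Mathlib

section
/- The partial order (W, ≤_W) of finite prefix-antichains of binary words is universal: every countable partial order embeds into it as an induced suborder. -/
/-- A finite set of binary words is an antichain w.r.t. the prefix order. -/
def IsAntichainW (A : Finset (List Bool)) : Prop :=
  ∀ w ∈ A, ∀ w' ∈ A, w' <+: w → w = w'

/-- `A ≤_W B` iff every word of `A` has a prefix in `B`. -/
def WleW (A B : Finset (List Bool)) : Prop :=
  ∀ w ∈ A, ∃ w' ∈ B, w' <+: w

/-!
Enumerate `P` injectively by `e : P → ℕ` and attach to each `x` a clopen set `cell e x` of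
Cantor space by recursion along the enumeration: the union of the earlier cells of elements
below `x`, together with the fresh piece `{s | s (e x) = true}` cut down to the intersection of
the earlier cells of elements above `x`. Then `x ≤ y` gives `cell e x ⊆ cell e y`, while the
indicator of the upper set of `x` lies in `cell e y` exactly when `x ≤ y`, so the cells realize
the order by inclusion. Since `cell e x` only depends on finitely many coordinates, its minimal
covering words form a finite prefix-antichain, and for these canonical antichains `≤_W` is
inclusion of the corresponding clopen sets.
-/

namespace WordAntichain

section Cells

variable {P : Type} [PartialOrder P] {e : P → ℕ}

-- `∃ _ : e z < e x` rather than `∧` keeps the hypothesis in scope for the termination proof.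
def cell (e : P → ℕ) (x : P) : Set (ℕ → Bool) :=
  {s | (∃ z, ∃ _ : e z < e x, z ≤ x ∧ s ∈ cell e z) ∨
       (s (e x) = true ∧ ∀ z, e z < e x → x ≤ z → s ∈ cell e z)}
termination_by e x

lemma mem_cell {x : P} {s : ℕ → Bool} :
    s ∈ cell e x ↔ (∃ z, ∃ _ : e z < e x, z ≤ x ∧ s ∈ cell e z) ∨
       (s (e x) = true ∧ ∀ z, e z < e x → x ≤ z → s ∈ cell e z) := by
  rw [cell]; rfl

lemma dependsOn_cell (e : P → ℕ) (x : P) : DependsOn (· ∈ cell e x) (Set.Iio (e x + 1)) := by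
  induction x using (measure e).wf.induction with
  | _ x ih =>
    intro s t hst
    have below : ∀ z, e z < e x → (s ∈ cell e z) = (t ∈ cell e z) := fun z hz =>
      ih z hz fun i hi => hst i (by simp only [Set.mem_Iio] at hi ⊢; omega)
    have hx : s (e x) = t (e x) := hst (e x) (by simp)
    show (s ∈ cell e x) = (t ∈ cell e x)
    rw [mem_cell, mem_cell, hx]
    simp +contextual only [below]

lemma cell_mono (he : Function.Injective e) {x y : P} (hxy : x ≤ y) : cell e x ⊆ cell e y := by
  induction x using (measure e).wf.induction generalizing y with
  | _ x ih =>
    intro s hs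
    rcases lt_trichotomy (e x) (e y) with h | h | h
    · exact mem_cell.2 (Or.inl ⟨x, h, hxy, hs⟩)
    · rwa [← he h]
    · rcases mem_cell.1 hs with ⟨z, hz, hzx, hsz⟩ | ⟨-, hup⟩
      · exact ih z hz (hzx.trans hxy) hsz
      · exact hup y h hxy

open scoped Classical in
noncomputable def upperIndicator (e : P → ℕ) (x : P) : ℕ → Bool := fun i =>
  decide (∃ z, e z = i ∧ x ≤ z)

lemma upperIndicator_apply_eq_true (he : Function.Injective e) {x z : P} :
    upperIndicator e x (e z) = true ↔ x ≤ z := by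
  simp [upperIndicator, he.eq_iff]

lemma upperIndicator_mem_cell_iff (he : Function.Injective e) {x y : P} :
    upperIndicator e x ∈ cell e y ↔ x ≤ y := by
  induction y using (measure e).wf.induction with
  | _ y ih =>
    refine ⟨fun h => ?_, fun hxy => mem_cell.2 (Or.inr ⟨?_, fun z hz hyz => ?_⟩)⟩
    · rcases mem_cell.1 h with ⟨z, hz, hzy, hxz⟩ | ⟨hy, -⟩
      · exact ((ih z hz).1 hxz).trans hzy
      · exact (upperIndicator_apply_eq_true he).1 hy
    · exact (upperIndicator_apply_eq_true he).2 hxy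
    · exact (ih z hz).2 (hxy.trans hyz)

lemma cell_subset_cell_iff (he : Function.Injective e) {x y : P} :
    cell e x ⊆ cell e y ↔ x ≤ y :=
  ⟨fun h => (upperIndicator_mem_cell_iff he).1 (h ((upperIndicator_mem_cell_iff he).2 le_rfl)),
    cell_mono he⟩

end Cells

section Words

variable {C D : Set (ℕ → Bool)} {n : ℕ}

def cylinder (w : List Bool) : Set (ℕ → Bool) := {s | ∀ i (hi : i < w.length), s i = w[i]}

lemma cylinder_subset_of_prefix {u w : List Bool} (h : u <+: w) : cylinder w ⊆ cylinder u :=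
  fun s hs i hi => by rw [hs i (hi.trans_le h.length_le), h.getElem hi]

/- Minimality makes the representation canonical: `≤_W` is finer than inclusion of the covered
sets, e.g. `{[]}` and `{[false], [true]}` cover the same set but `[]` has no prefix in the
second. -/
def IsMinimalWord (C : Set (ℕ → Bool)) (w : List Bool) : Prop :=
  cylinder w ⊆ C ∧ ∀ v, v <+: w → cylinder v ⊆ C → v = w

lemma exists_isMinimalWord_prefix {w : List Bool} (hw : cylinder w ⊆ C) :
    ∃ u, u <+: w ∧ IsMinimalWord C u := by
  classical
  have hex : ∃ k, cylinder (w.take k) ⊆ C := ⟨w.length, by rwa [List.take_length]⟩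
  refine ⟨w.take (Nat.find hex), List.take_prefix _ _, Nat.find_spec hex, fun v hv hvC => ?_⟩
  have hvw : v = w.take v.length := List.prefix_iff_eq_take.1 (hv.trans (List.take_prefix _ _))
  have hmin : Nat.find hex ≤ v.length := Nat.find_min' hex (hvw ▸ hvC)
  have hvlen := hv.length_le
  rw [List.length_take] at hvlen
  exact hv.eq_of_length (by rw [List.length_take]; omega)

lemma cylinder_take_subset (hC : DependsOn (· ∈ C) (Set.Iio n)) {w : List Bool}
    (hw : cylinder w ⊆ C) : cylinder (w.take n) ⊆ C := by
  intro s hs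
  let t : ℕ → Bool := fun i => if h : i < w.length then w[i] else s i
  have ht : t ∈ C := hw fun i hi => dif_pos hi
  refine Eq.mp (hC fun i hi => ?_) ht
  by_cases hiw : i < w.length
  · have hin : i < (w.take n).length := by simp only [List.length_take, Set.mem_Iio] at hi ⊢; omega
    simp [t, hiw, hs i hin]
  · simp [t, hiw]

lemma IsMinimalWord.length_le (hC : DependsOn (· ∈ C) (Set.Iio n)) {w : List Bool}
    (hw : IsMinimalWord C w) : w.length ≤ n :=
  (List.take_eq_self_iff w).1 <| hw.2 _ (List.take_prefix _ _) (cylinder_take_subset hC hw.1)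

lemma exists_isMinimalWord_of_mem (hC : DependsOn (· ∈ C) (Set.Iio n)) {s : ℕ → Bool}
    (hs : s ∈ C) : ∃ w, IsMinimalWord C w ∧ s ∈ cylinder w := by
  let w := List.ofFn fun i : Fin n => s i
  have hsw : s ∈ cylinder w := fun i hi => by simp [w]
  have hwC : cylinder w ⊆ C := fun t ht => Eq.mp (hC fun i hi =>
    have hi : i < w.length := by simpa [w] using hi
    (hsw i hi).trans (ht i hi).symm) hs
  obtain ⟨u, huw, hu⟩ := exists_isMinimalWord_prefix hwC
  exact ⟨u, hu, cylinder_subset_of_prefix huw hsw⟩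

lemma finite_setOf_isMinimalWord (hC : DependsOn (· ∈ C) (Set.Iio n)) :
    {w | IsMinimalWord C w}.Finite :=
  (List.finite_length_le Bool n).subset fun _ hw => hw.length_le hC

noncomputable def minimalWords (hC : DependsOn (· ∈ C) (Set.Iio n)) : Finset (List Bool) :=
  (finite_setOf_isMinimalWord hC).toFinset

lemma mem_minimalWords (hC : DependsOn (· ∈ C) (Set.Iio n)) {w : List Bool} :
    w ∈ minimalWords hC ↔ IsMinimalWord C w :=
  Set.Finite.mem_toFinset _

lemma isAntichainW_minimalWords (hC : DependsOn (· ∈ C) (Set.Iio n)) :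
    IsAntichainW (minimalWords hC) := by
  intro w hw w' hw' hpre
  rw [mem_minimalWords] at hw hw'
  exact (hw.2 w' hpre hw'.1).symm

lemma wleW_minimalWords_iff {m : ℕ} (hC : DependsOn (· ∈ C) (Set.Iio n))
    (hD : DependsOn (· ∈ D) (Set.Iio m)) :
    WleW (minimalWords hC) (minimalWords hD) ↔ C ⊆ D := by
  simp only [WleW, mem_minimalWords]
  constructor
  · intro h s hs
    obtain ⟨w, hw, hsw⟩ := exists_isMinimalWord_of_mem hC hs
    obtain ⟨v, hv, hvw⟩ := h w hw
    exact hv.1 (cylinder_subset_of_prefix hvw hsw)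
  · intro h w hw
    obtain ⟨v, hvw, hv⟩ := exists_isMinimalWord_prefix (hw.1.trans h)
    exact ⟨v, hv, hvw⟩

end Words

end WordAntichain

lemma wleW_refl (A : Finset (List Bool)) : WleW A A := fun w hw => ⟨w, hw, List.prefix_refl w⟩

/-- `(W, ≤_W)` is universal: every countable partial order embeds into it. -/
theorem wleW_universal (P : Type) [PartialOrder P] [Countable P] :
    ∃ φ : P → Finset (List Bool),
      (∀ x, IsAntichainW (φ x)) ∧ Function.Injective φ ∧
      (∀ x y, x ≤ y ↔ WleW (φ x) (φ y)) := by
  open WordAntichain in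
  obtain ⟨e, he⟩ := Countable.exists_injective_nat P
  let φ x := minimalWords (dependsOn_cell e x)
  have hφ : ∀ x y, x ≤ y ↔ WleW (φ x) (φ y) := fun x y =>
    (cell_subset_cell_iff he).symm.trans (wleW_minimalWords_iff _ _).symm
  refine ⟨φ, fun x => isAntichainW_minimalWords _, fun x y hxy => ?_, hφ⟩
  exact le_antisymm ((hφ x y).2 (hxy ▸ wleW_refl _)) ((hφ y x).2 (hxy ▸ wleW_refl _))
end

section
/- Every finite partial order embeds into (W, ≤_W), the order of finite prefix-antichains of binary words. -/
/-!
Fix a prefix code on `P`, i.e. an injective assignment of binary words none of which is a proper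
prefix of another (the unary code `1ⁿ0` composed with an enumeration of `P` will do). Mapping `x`
to the set of codewords of its principal downset gives an antichain, and between such images
`≤_W` is exactly inclusion of the underlying sets, hence of the downsets, hence `≤` on `P`.
-/

def IsPrefixCode {α β : Type*} (w : α → List β) : Prop :=
  ∀ a b, w a <+: w b → a = b

namespace IsPrefixCode

variable {α : Type*}

theorem injective {β : Type*} {w : α → List β} (hw : IsPrefixCode w) : Function.Injective w :=
  fun a b hab => hw a b (hab ▸ List.prefix_refl _)

theorem comp_injective {β γ : Type*} {w : α → List β} (hw : IsPrefixCode w) {f : γ → α}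
    (hf : Function.Injective f) : IsPrefixCode (w ∘ f) :=
  fun _ _ hab => hf (hw _ _ hab)

theorem isAntichainW_image {w : α → List Bool} (hw : IsPrefixCode w) (s : Finset α) :
    IsAntichainW (s.image w) := by
  intro u hu v hv hvu
  obtain ⟨a, -, rfl⟩ := Finset.mem_image.1 hu
  obtain ⟨b, -, rfl⟩ := Finset.mem_image.1 hv
  rw [hw b a hvu]

theorem wleW_image_iff [DecidableEq α] {w : α → List Bool} (hw : IsPrefixCode w)
    {s t : Finset α} : WleW (s.image w) (t.image w) ↔ s ⊆ t := by
  constructor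
  · intro h a ha
    obtain ⟨v, hv, hva⟩ := h (w a) (Finset.mem_image_of_mem w ha)
    obtain ⟨b, hb, rfl⟩ := Finset.mem_image.1 hv
    rwa [← hw b a hva]
  · intro hst u hu
    obtain ⟨a, ha, rfl⟩ := Finset.mem_image.1 hu
    exact ⟨w a, Finset.mem_image_of_mem w (hst ha), List.prefix_refl _⟩

end IsPrefixCode

def unaryCode (n : ℕ) : List Bool :=
  List.replicate n true ++ [false]

theorem isPrefixCode_unaryCode : IsPrefixCode unaryCode := by
  intro m n
  induction m generalizing n with
  | zero => cases n <;> simp [unaryCode, List.replicate_succ]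
  | succ m ih =>
    cases n with
    | zero => simp [unaryCode, List.replicate_succ]
    | succ n => simpa [unaryCode, List.replicate_succ] using ih n

theorem exists_isPrefixCode (α : Type*) [Countable α] : ∃ w : α → List Bool, IsPrefixCode w :=
  let ⟨f, hf⟩ := Countable.exists_injective_nat α
  ⟨unaryCode ∘ f, isPrefixCode_unaryCode.comp_injective hf⟩

def finsetIicEmbedding (P : Type*) [PartialOrder P] [Fintype P] [DecidableLE P] :
    P ↪o Finset P :=
  OrderEmbedding.ofMapLEIff (fun x => Finset.univ.filter (· ≤ x)) fun x y =>
    ⟨fun h => by simpa using h (Finset.mem_filter.2 ⟨Finset.mem_univ x, le_rfl⟩),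
      fun hxy z hz => by simpa using (Finset.mem_filter.1 hz).2.trans hxy⟩

/-- Every finite partial order embeds into `(W, ≤_W)`. -/
theorem wleW_finite_universal (P : Type) [PartialOrder P] [Fintype P] :
    ∃ φ : P → Finset (List Bool),
      (∀ x, IsAntichainW (φ x)) ∧ Function.Injective φ ∧
      (∀ x y, x ≤ y ↔ WleW (φ x) (φ y)) := by
  classical
  obtain ⟨w, hw⟩ := exists_isPrefixCode P
  let ι := finsetIicEmbedding P
  refine ⟨fun x => (ι x).image w, fun x => hw.isAntichainW_image _,
    (Finset.image_injective hw.injective).comp ι.injective,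
    fun x y => ι.le_iff_le.symm.trans hw.wleW_image_iff.symm⟩
end

section
/- The partial order (I, ≤_I) of finite sets of disjoint closed rational intervals ordered by coverage is universal: every countable partial order embeds into it. -/
/-- An element of `I`: a finite set of pairwise disjoint closed rational
subintervals of `[0,1]`, each with nonempty interior. -/
def ValidI (A : Finset (ℚ × ℚ)) : Prop :=
  (∀ p ∈ A, 0 ≤ p.1 ∧ p.1 < p.2 ∧ p.2 ≤ 1) ∧
  (∀ p ∈ A, ∀ q ∈ A, p ≠ q → Disjoint (Set.Icc p.1 p.2) (Set.Icc q.1 q.2))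

/-- `A ≤_I B` iff every interval of `A` is contained in some interval of `B`. -/
def leI (A B : Finset (ℚ × ℚ)) : Prop :=
  ∀ p ∈ A, ∃ q ∈ B, q.1 ≤ p.1 ∧ p.2 ≤ q.2

namespace LeIUniv

/-- `Pre D E` : `D` is an "initial segment" of `E`. -/
def Pre (D E : Finset ℕ) : Prop :=
  D ⊆ E ∧ ∀ i ∈ E, ∀ m ∈ D, i ≤ m → i ∈ D

lemma pre_refl (D : Finset ℕ) : Pre D D :=
  ⟨Finset.Subset.refl D, fun i hi _ _ _ => hi⟩

lemma pre_trans {D E F : Finset ℕ} (h1 : Pre D E) (h2 : Pre E F) : Pre D F :=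
  ⟨h1.1.trans h2.1, fun i hiF m hmD hle => h1.2 i (h2.2 i hiF m (h1.1 hmD) hle) m hmD hle⟩

noncomputable def mx (D : Finset ℕ) : ℕ := if h : D.Nonempty then D.max' h else 0

lemma mx_mem {D : Finset ℕ} (h : D.Nonempty) : mx D ∈ D := by
  simp only [mx, dif_pos h]; exact D.max'_mem h

lemma le_mx {D : Finset ℕ} {m : ℕ} (hm : m ∈ D) : m ≤ mx D := by
  have h : D.Nonempty := ⟨m, hm⟩
  simp only [mx, dif_pos h]; exact D.le_max' m hm

lemma mx_eq {D : Finset ℕ} {m : ℕ} (hm : m ∈ D) (hub : ∀ i ∈ D, i ≤ m) : mx D = m :=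
  le_antisymm (hub _ (mx_mem ⟨m, hm⟩)) (le_mx hm)

def aQ (D : Finset ℕ) : ℚ := ∑ i ∈ D, 2 * ((1:ℚ)/3)^(i+1)

lemma pow3_pos (n : ℕ) : (0:ℚ) < ((1:ℚ)/3)^n := pow_pos (by norm_num) n

lemma pow3_anti {a b : ℕ} (h : a < b) : ((1:ℚ)/3)^b < ((1:ℚ)/3)^a :=
  pow_lt_pow_right_of_lt_one₀ (by norm_num) (by norm_num) h

lemma aQ_nonneg (D : Finset ℕ) : 0 ≤ aQ D :=
  Finset.sum_nonneg fun i _ => by positivity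

lemma aQ_mono {D E : Finset ℕ} (h : D ⊆ E) : aQ D ≤ aQ E :=
  Finset.sum_le_sum_of_subset_of_nonneg h (fun i _ _ => by positivity)

lemma sum_range_pow3 (M : ℕ) :
    ∑ i ∈ Finset.range M, 2 * ((1:ℚ)/3)^(i+1) = 1 - ((1:ℚ)/3)^M := by
  induction M with
  | zero => simp
  | succ M ih =>
    rw [Finset.sum_range_succ, ih, pow_succ]
    ring

/-- sum of the weights over a set contained in `[a, b]` is at most `(1/3)^a - (1/3)^(b+1)`. -/
lemma sum_weights_le {S : Finset ℕ} {a b : ℕ} (hab : a ≤ b + 1)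
    (h1 : ∀ i ∈ S, a ≤ i) (h2 : ∀ i ∈ S, i ≤ b) :
    ∑ i ∈ S, 2 * ((1:ℚ)/3)^(i+1) ≤ ((1:ℚ)/3)^a - ((1:ℚ)/3)^(b+1) := by
  have hsub : S ⊆ Finset.Ico a (b+1) := by
    intro i hi
    exact Finset.mem_Ico.mpr ⟨h1 i hi, Nat.lt_succ_of_le (h2 i hi)⟩
  calc ∑ i ∈ S, 2 * ((1:ℚ)/3)^(i+1)
      ≤ ∑ i ∈ Finset.Ico a (b+1), 2 * ((1:ℚ)/3)^(i+1) :=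
        Finset.sum_le_sum_of_subset_of_nonneg hsub (fun i _ _ => by positivity)
    _ = ((1:ℚ)/3)^a - ((1:ℚ)/3)^(b+1) := by
        rw [Finset.sum_Ico_eq_sub _ hab, sum_range_pow3, sum_range_pow3]
        ring

/-- If `Pre D E` then the `E`-interval is nested inside the `D`-interval. -/
lemma pre_nest {D E : Finset ℕ} (hD : D.Nonempty) (h : Pre D E) :
    aQ D ≤ aQ E ∧ aQ E + ((1:ℚ)/3)^(mx E + 1) ≤ aQ D + ((1:ℚ)/3)^(mx D + 1) := by
  classical
  have hDE := h.1
  have hE : E.Nonempty := ⟨hD.choose, hDE hD.choose_spec⟩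
  refine ⟨aQ_mono hDE, ?_⟩
  have hmx : mx D ≤ mx E := le_mx (hDE (mx_mem hD))
  have hsplit : ∑ i ∈ E \ D, 2 * ((1:ℚ)/3)^(i+1) + aQ D = aQ E := Finset.sum_sdiff hDE
  have hbound : ∑ i ∈ E \ D, 2 * ((1:ℚ)/3)^(i+1)
      ≤ ((1:ℚ)/3)^(mx D + 1) - ((1:ℚ)/3)^(mx E + 1) := by
    apply sum_weights_le (by omega)
    · intro i hi
      obtain ⟨hiE, hiD⟩ := Finset.mem_sdiff.mp hi
      by_contra hlt
      exact hiD (h.2 i hiE (mx D) (mx_mem hD) (by omega))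
    · intro i hi
      exact le_mx (Finset.mem_sdiff.mp hi).1
  linarith

/-- Key separation lemma: if `j ∈ D`, `j ∉ E`, the sets agree below `j`, and
`j ≤ mx E`, then the `E`-interval lies strictly to the left of the `D`-interval. -/
lemma sep_of_branch {D E : Finset ℕ} (hE : E.Nonempty) {j : ℕ}
    (hjD : j ∈ D) (hjE : j ∉ E) (hlt : ∀ i, i < j → (i ∈ D ↔ i ∈ E))
    (hje : j ≤ mx E) :
    aQ E + ((1:ℚ)/3)^(mx E + 1) < aQ D := by
  classical
  have hfilter : D.filter (fun i => i < j) = E.filter (fun i => i < j) := by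
    ext i
    simp only [Finset.mem_filter]
    constructor
    · rintro ⟨hi, hij⟩; exact ⟨(hlt i hij).mp hi, hij⟩
    · rintro ⟨hi, hij⟩; exact ⟨(hlt i hij).mpr hi, hij⟩
  set c : ℚ := ∑ i ∈ D.filter (fun i => i < j), 2 * ((1:ℚ)/3)^(i+1) with hc
  have hDsplit : c + ∑ i ∈ D.filter (fun i => ¬ i < j), 2 * ((1:ℚ)/3)^(i+1) = aQ D :=
    Finset.sum_filter_add_sum_filter_not D _ _
  have hEsplit : c + ∑ i ∈ E.filter (fun i => ¬ i < j), 2 * ((1:ℚ)/3)^(i+1) = aQ E := by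
    rw [hc, hfilter]; exact Finset.sum_filter_add_sum_filter_not E _ _
  have hDlow : 2 * ((1:ℚ)/3)^(j+1) ≤ ∑ i ∈ D.filter (fun i => ¬ i < j), 2 * ((1:ℚ)/3)^(i+1) := by
    apply Finset.single_le_sum (f := fun i => 2 * ((1:ℚ)/3)^(i+1)) (fun i _ => by positivity)
    simp only [Finset.mem_filter]
    exact ⟨hjD, by omega⟩
  have hEhigh : ∑ i ∈ E.filter (fun i => ¬ i < j), 2 * ((1:ℚ)/3)^(i+1)
      ≤ ((1:ℚ)/3)^(j+1) - ((1:ℚ)/3)^(mx E + 1) := by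
    apply sum_weights_le (by omega)
    · intro i hi
      obtain ⟨hiE, hij⟩ := Finset.mem_filter.mp hi
      have : i ≠ j := fun h => hjE (h ▸ hiE)
      omega
    · intro i hi
      exact le_mx (Finset.mem_filter.mp hi).1
  have hp := pow3_pos (j+1)
  linarith

/-- Two `Pre`-incomparable nonempty sets have separated intervals. -/
lemma not_pre_sep {D E : Finset ℕ} (hD : D.Nonempty) (hE : E.Nonempty)
    (h1 : ¬ Pre D E) (h2 : ¬ Pre E D) :
    aQ E + ((1:ℚ)/3)^(mx E + 1) < aQ D ∨ aQ D + ((1:ℚ)/3)^(mx D + 1) < aQ E := by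
  classical
  have hne : D ≠ E := fun h => h1 (h ▸ pre_refl D)
  set T : Finset ℕ := (D \ E) ∪ (E \ D) with hT
  have hTne : T.Nonempty := by
    rw [Finset.nonempty_iff_ne_empty]
    intro hemp
    have h3 : D \ E = ∅ ∧ E \ D = ∅ := Finset.union_eq_empty.mp hemp
    exact hne (Finset.Subset.antisymm
      (Finset.sdiff_eq_empty_iff_subset.mp h3.1) (Finset.sdiff_eq_empty_iff_subset.mp h3.2))
  set j : ℕ := T.min' hTne with hj
  have hjT : j ∈ T := T.min'_mem hTne
  have hmin : ∀ i ∈ T, j ≤ i := fun i hi => T.min'_le i hi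
  have hlt : ∀ i, i < j → (i ∈ D ↔ i ∈ E) := by
    intro i hij
    by_contra hiff
    have hiT : i ∈ T := by
      rcases Classical.em (i ∈ D) with hiD | hiD
      · have hiE : i ∉ E := fun hiE => hiff (iff_of_true hiD hiE)
        exact Finset.mem_union.mpr (Or.inl (Finset.mem_sdiff.mpr ⟨hiD, hiE⟩))
      · have hiE : i ∈ E := by
          by_contra hiE
          exact hiff (iff_of_false hiD hiE)
        exact Finset.mem_union.mpr (Or.inr (Finset.mem_sdiff.mpr ⟨hiE, hiD⟩))
    exact absurd (hmin i hiT) (by omega)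
  rcases Finset.mem_union.mp hjT with hcase | hcase
  · obtain ⟨hjD, hjE⟩ := Finset.mem_sdiff.mp hcase
    have hje : j ≤ mx E := by
      by_contra hgt
      push_neg at hgt
      apply h2
      constructor
      · intro i hi
        have : i < j := by have := le_mx hi; omega
        exact (hlt i this).mpr hi
      · intro i hiD m hm him
        have : i < j := by have := le_mx hm; omega
        exact (hlt i this).mp hiD
    exact Or.inl (sep_of_branch hE hjD hjE hlt hje)
  · obtain ⟨hjE, hjD⟩ := Finset.mem_sdiff.mp hcase
    have hje : j ≤ mx D := by
      by_contra hgt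
      push_neg at hgt
      apply h1
      constructor
      · intro i hi
        have : i < j := by have := le_mx hi; omega
        exact (hlt i this).mp hi
      · intro i hiE m hm him
        have : i < j := by have := le_mx hm; omega
        exact (hlt i this).mpr hiE
    have hsym : ∀ i, i < j → (i ∈ E ↔ i ∈ D) := fun i hi => (hlt i hi).symm
    exact Or.inr (sep_of_branch hD hjE hjD hsym hje)

noncomputable def JI (D : Finset ℕ) : ℚ × ℚ := (aQ D, aQ D + ((1:ℚ)/3)^(mx D + 1))

variable {P : Type} [PartialOrder P]

open Classical in
/-- The "type" of witness `z` at stage `w` : indices of upper bounds of `z`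
processed no later than `w`. -/
noncomputable def Dset (f : P → ℕ) (z w : P) : Finset ℕ :=
  (Finset.range (f w + 1)).filter (fun n => ∃ v, z ≤ v ∧ f v = n)

lemma mem_Dset {f : P → ℕ} {z w : P} {n : ℕ} :
    n ∈ Dset f z w ↔ n ≤ f w ∧ ∃ v, z ≤ v ∧ f v = n := by
  simp [Dset, Nat.lt_succ_iff]

lemma fw_mem_Dset {f : P → ℕ} {z w : P} (h : z ≤ w) : f w ∈ Dset f z w :=
  mem_Dset.mpr ⟨le_rfl, w, h, rfl⟩

lemma Dset_nonempty {f : P → ℕ} {z w : P} (h : z ≤ w) : (Dset f z w).Nonempty :=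
  ⟨f w, fw_mem_Dset h⟩

lemma mx_Dset {f : P → ℕ} {z w : P} (h : z ≤ w) : mx (Dset f z w) = f w :=
  mx_eq (fw_mem_Dset h) (fun i hi => (mem_Dset.mp hi).1)

/-- The index sets relevant to `x`. -/
def Sx (f : P → ℕ) (x : P) : Set (Finset ℕ) :=
  {D | ∃ z w, z ≤ w ∧ w ≤ x ∧ f w ≤ f x ∧ D = Dset f z w}

lemma Sx_nonempty_mem {f : P → ℕ} {x : P} {D : Finset ℕ} (h : D ∈ Sx f x) :
    D.Nonempty := by
  obtain ⟨z, w, hzw, _, _, rfl⟩ := h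
  exact Dset_nonempty hzw

lemma Sx_subset_range {f : P → ℕ} {x : P} {D : Finset ℕ} (h : D ∈ Sx f x) :
    D ⊆ Finset.range (f x + 1) := by
  obtain ⟨z, w, hzw, _, hfw, rfl⟩ := h
  intro n hn
  have := (mem_Dset.mp hn).1
  exact Finset.mem_range.mpr (by omega)

lemma Sx_finite (f : P → ℕ) (x : P) : (Sx f x).Finite := by
  apply Set.Finite.subset (Finset.range (f x + 1)).powerset.finite_toSet
  intro D hD
  exact Finset.mem_coe.mpr (Finset.mem_powerset.mpr (Sx_subset_range hD))

/-- The `Pre`-minimal elements of `Sx`. -/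
def MinS (f : P → ℕ) (x : P) : Set (Finset ℕ) :=
  {D | D ∈ Sx f x ∧ ∀ E ∈ Sx f x, Pre E D → E = D}

lemma MinS_finite (f : P → ℕ) (x : P) : (JI '' MinS f x).Finite :=
  ((Sx_finite f x).subset (fun _ hD => hD.1)).image JI

noncomputable def phi (f : P → ℕ) (x : P) : Finset (ℚ × ℚ) :=
  (MinS_finite f x).toFinset

lemma mem_phi {f : P → ℕ} {x : P} {p : ℚ × ℚ} :
    p ∈ phi f x ↔ ∃ D, D ∈ MinS f x ∧ JI D = p := by
  simp [phi, Set.Finite.mem_toFinset, Set.mem_image]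

/-- Every member of a set of finsets has a `Pre`-minimal member below it. -/
lemma exists_min (S : Set (Finset ℕ)) (E : Finset ℕ) (hE : E ∈ S) :
    ∃ F, (F ∈ S ∧ ∀ G ∈ S, Pre G F → G = F) ∧ Pre F E := by
  obtain ⟨n, hn⟩ : ∃ n, E.card = n := ⟨_, rfl⟩
  induction n using Nat.strong_induction_on generalizing E with
  | _ n ih =>
    by_cases h : ∀ G ∈ S, Pre G E → G = E
    · exact ⟨E, ⟨hE, h⟩, pre_refl E⟩
    · push_neg at h
      obtain ⟨G, hGS, hGE, hne⟩ := h
      have hcard : G.card < n := hn ▸ Finset.card_lt_card (ssubset_of_subset_of_ne hGE.1 hne)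
      obtain ⟨F, h1, h3⟩ := ih G.card hcard G hGS rfl
      exact ⟨F, h1, pre_trans h3 hGE⟩

lemma phi_valid (f : P → ℕ) (x : P) : ValidI (phi f x) := by
  constructor
  · intro p hp
    obtain ⟨D, hD, rfl⟩ := mem_phi.mp hp
    have hne : D.Nonempty := Sx_nonempty_mem hD.1
    have h1 : (0:ℚ) ≤ aQ D := aQ_nonneg D
    have h2 : aQ D < aQ D + ((1:ℚ)/3)^(mx D + 1) := by
      have := pow3_pos (mx D + 1); linarith
    have h3 : aQ D + ((1:ℚ)/3)^(mx D + 1) ≤ 1 := by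
      have hsub : D ⊆ Finset.range (mx D + 1) := by
        intro i hi; exact Finset.mem_range.mpr (Nat.lt_succ_of_le (le_mx hi))
      have : aQ D ≤ ∑ i ∈ Finset.range (mx D + 1), 2 * ((1:ℚ)/3)^(i+1) :=
        Finset.sum_le_sum_of_subset_of_nonneg hsub (fun i _ _ => by positivity)
      rw [sum_range_pow3] at this
      linarith
    exact ⟨h1, h2, h3⟩
  · intro p hp q hq hpq
    obtain ⟨D, hD, rfl⟩ := mem_phi.mp hp
    obtain ⟨E, hEm, rfl⟩ := mem_phi.mp hq
    have hDE : D ≠ E := fun h => hpq (by rw [h])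
    have hnp1 : ¬ Pre D E := fun h => hDE (hEm.2 D hD.1 h)
    have hnp2 : ¬ Pre E D := fun h => hDE ((hD.2 E hEm.1 h).symm)
    rcases not_pre_sep (Sx_nonempty_mem hD.1) (Sx_nonempty_mem hEm.1) hnp1 hnp2 with h | h
    · rw [Set.disjoint_right]
      intro t ht1 ht2
      simp only [JI, Set.mem_Icc] at ht1 ht2
      linarith [ht1.2, ht2.1]
    · rw [Set.disjoint_left]
      intro t ht1 ht2
      simp only [JI, Set.mem_Icc] at ht1 ht2
      linarith [ht1.2, ht2.1]

lemma phi_forward (f : P → ℕ) {x y : P} (hxy : x ≤ y) : leI (phi f x) (phi f y) := by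
  intro p hp
  obtain ⟨D, hD, rfl⟩ := mem_phi.mp hp
  obtain ⟨z, w, hzw, hwx, hfw, rfl⟩ := hD.1
  -- find E ∈ Sx f y with Pre E (Dset f z w)
  have hEex : ∃ E, E ∈ Sx f y ∧ Pre E (Dset f z w) := by
    by_cases hcase : f w ≤ f y
    · exact ⟨Dset f z w, ⟨z, w, hzw, le_trans hwx hxy, hcase, rfl⟩, pre_refl _⟩
    · push_neg at hcase
      refine ⟨Dset f z y, ⟨z, y, le_trans hzw (le_trans hwx hxy), le_refl y, le_rfl, rfl⟩, ?_, ?_⟩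
      · intro n hn
        obtain ⟨hn1, v, hv1, hv2⟩ := mem_Dset.mp hn
        exact mem_Dset.mpr ⟨by omega, v, hv1, hv2⟩
      · intro i hi m hm him
        obtain ⟨hi1, v, hv1, hv2⟩ := mem_Dset.mp hi
        have hm1 := (mem_Dset.mp hm).1
        exact mem_Dset.mpr ⟨by omega, v, hv1, hv2⟩
  obtain ⟨E, hES, hpre⟩ := hEex
  obtain ⟨F, hFmin, hFE⟩ := exists_min (Sx f y) E hES
  have hFD : Pre F (Dset f z w) := pre_trans hFE hpre
  have hFne : F.Nonempty := Sx_nonempty_mem hFmin.1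
  have := pre_nest hFne hFD
  exact ⟨JI F, mem_phi.mpr ⟨F, hFmin, rfl⟩, this.1, this.2⟩

lemma phi_backward (f : P → ℕ) (hf : Function.Injective f) {x y : P}
    (h : leI (phi f x) (phi f y)) : x ≤ y := by
  -- the set Dset f x x belongs to Sx f x
  have hD0 : Dset f x x ∈ Sx f x := ⟨x, x, le_rfl, le_rfl, le_rfl, rfl⟩
  obtain ⟨D1, hD1min, hD1pre⟩ := exists_min (Sx f x) _ hD0
  have hD1ne : D1.Nonempty := Sx_nonempty_mem hD1min.1
  obtain ⟨q, hq, hq1, hq2⟩ := h (JI D1) (mem_phi.mpr ⟨D1, hD1min, rfl⟩)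
  obtain ⟨E, hEmin, rfl⟩ := mem_phi.mp hq
  have hEne : E.Nonempty := Sx_nonempty_mem hEmin.1
  simp only [JI] at hq1 hq2
  -- show E ⊆ D1
  have hsub : E ⊆ D1 := by
    by_cases hc1 : Pre E D1
    · exact hc1.1
    · by_cases hc2 : Pre D1 E
      · -- intervals coincide, so mx E = mx D1 and E ⊆ D1
        have hnest := pre_nest hD1ne hc2
        have haeq : aQ D1 = aQ E := le_antisymm hnest.1 hq1
        have hpeq : ((1:ℚ)/3)^(mx E + 1) = ((1:ℚ)/3)^(mx D1 + 1) := by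
          have l1 : ((1:ℚ)/3)^(mx E + 1) ≤ ((1:ℚ)/3)^(mx D1 + 1) := by linarith [hnest.2]
          have l2 : ((1:ℚ)/3)^(mx D1 + 1) ≤ ((1:ℚ)/3)^(mx E + 1) := by linarith
          linarith
        have hmxeq : mx E = mx D1 := by
          by_contra hne
          rcases Nat.lt_or_ge (mx E) (mx D1) with hlt | hge
          · have := pow3_anti (a := mx E + 1) (b := mx D1 + 1) (by omega)
            linarith
          · have hlt2 : mx D1 < mx E := by omega
            have := pow3_anti (a := mx D1 + 1) (b := mx E + 1) (by omega)
            linarith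
        intro i hi
        exact hc2.2 i hi (mx D1) (mx_mem hD1ne) (hmxeq ▸ le_mx hi)
      · exfalso
        rcases not_pre_sep hD1ne hEne hc2 hc1 with hsep | hsep
        · have := pow3_pos (mx D1 + 1); linarith
        · have := pow3_pos (mx D1 + 1); linarith
  -- mx E = f w' for the stage element w' of E, and mx E ∈ Dset f x x
  obtain ⟨z', w', hz'w', hw'y, hfw', hEeq⟩ := hEmin.1
  have hmxE : mx E = f w' := by rw [hEeq]; exact mx_Dset hz'w'
  have hmem : mx E ∈ Dset f x x := hD1pre.1 (hsub (mx_mem hEne))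
  obtain ⟨_, v, hv1, hv2⟩ := mem_Dset.mp hmem
  have : v = w' := hf (by rw [hv2, hmxE])
  exact le_trans hv1 (this ▸ hw'y)

end LeIUniv


/-- `(I, ≤_I)` is universal: every countable partial order embeds into it. -/
theorem leI_universal (P : Type) [PartialOrder P] [Countable P] :
    ∃ φ : P → Finset (ℚ × ℚ),
      (∀ x, ValidI (φ x)) ∧ Function.Injective φ ∧
      (∀ x y, x ≤ y ↔ leI (φ x) (φ y)) := by
  obtain ⟨f, hf⟩ := exists_injective_nat P
  refine ⟨LeIUniv.phi f, fun x => LeIUniv.phi_valid f x, ?_, ?_⟩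
  · intro x y hxy
    have h1 : x ≤ y := LeIUniv.phi_backward f hf (by
      rw [hxy]; exact fun p hp => ⟨p, hp, le_rfl, le_rfl⟩)
    have h2 : y ≤ x := LeIUniv.phi_backward f hf (by
      rw [← hxy]; exact fun p hp => ⟨p, hp, le_rfl, le_rfl⟩)
    exact le_antisymm h1 h2
  · intro x y
    exact ⟨fun h => LeIUniv.phi_forward f h, fun h => LeIUniv.phi_backward f hf h⟩
end

section
/- For rationals a < b and a' < b', the triangle with vertices (a, a²), ((a+b)/2, ab), (b, b²) is contained in the triangle with vertices (a', a'²), ((a'+b')/2, a'b'), (b', b'²) if and only if [a,b] ⊆ [a',b']. -/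
/-- A point satisfying the three half-plane inequalities lies in the triangle. -/
lemma mem_tri (a' b' : ℚ) (h : a' < b') (x y : ℚ)
    (h1 : 2 * b' * x - b' ^ 2 ≤ y) (h2 : 2 * a' * x - a' ^ 2 ≤ y)
    (h3 : y ≤ (a' + b') * x - a' * b') :
    (x, y) ∈ convexHull ℚ ({(a', a' ^ 2), ((a' + b') / 2, a' * b'), (b', b' ^ 2)} : Set (ℚ × ℚ)) := by
  set d : ℚ := (b' - a') ^ 2 with hd
  have hdpos : 0 < d := pow_pos (sub_pos.mpr h) 2
  set w : Fin 3 → ℚ := ![(y - 2 * b' * x + b' ^ 2) / d,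
      2 * ((a' + b') * x - a' * b' - y) / d, (y - 2 * a' * x + a' ^ 2) / d] with hw
  set z : Fin 3 → ℚ × ℚ := ![(a', a' ^ 2), ((a' + b') / 2, a' * b'), (b', b' ^ 2)] with hz
  have hwnn : ∀ i ∈ Finset.univ, 0 ≤ w i := by
    intro i _
    fin_cases i <;> simp [hw] <;> exact div_nonneg (by linarith) hdpos.le
  have hwsum : ∑ i ∈ Finset.univ, w i = 1 := by
    simp [hw, Fin.sum_univ_three]
    field_simp
    ring
  have hzmem : ∀ i ∈ Finset.univ, z i ∈
      convexHull ℚ ({(a', a' ^ 2), ((a' + b') / 2, a' * b'), (b', b' ^ 2)} : Set (ℚ × ℚ)) := by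
    intro i _
    apply subset_convexHull
    fin_cases i <;> simp [hz]
  have := (convex_convexHull ℚ _).sum_mem hwnn hwsum hzmem
  convert this using 1
  simp [hw, hz, Fin.sum_univ_three, Prod.ext_iff, Prod.smul_def]
  constructor <;> (field_simp; ring)

/-- The triangle with vertices `(a,a²), ((a+b)/2, ab), (b,b²)` is contained in the
triangle with vertices `(a',a'²), ((a'+b')/2, a'b'), (b',b'²)` iff `[a,b] ⊆ [a',b']`. -/
theorem triangle_subset_iff (a b a' b' : ℚ) (hab : a < b) (hab' : a' < b') :
    convexHull ℚ ({(a, a ^ 2), ((a + b) / 2, a * b), (b, b ^ 2)} : Set (ℚ × ℚ)) ⊆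
      convexHull ℚ ({(a', a' ^ 2), ((a' + b') / 2, a' * b'), (b', b' ^ 2)} : Set (ℚ × ℚ)) ↔
    Set.Icc a b ⊆ Set.Icc a' b' := by
  constructor
  · intro h
    have hcvx : Convex ℚ {p : ℚ × ℚ | p.2 ≤ (a' + b') * p.1 - a' * b'} := by
      intro p hp q hq s t hs ht hst
      simp only [Set.mem_setOf_eq] at *
      have : (s • p + t • q).2 = s * p.2 + t * q.2 := rfl
      have h2 : (s • p + t • q).1 = s * p.1 + t * q.1 := rfl
      rw [this, h2]
      have hs1 : s = 1 - t := by linarith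
      subst hs1
      nlinarith [mul_le_mul_of_nonneg_left hp hs, mul_le_mul_of_nonneg_left hq ht]
    have hsub : convexHull ℚ ({(a', a' ^ 2), ((a' + b') / 2, a' * b'), (b', b' ^ 2)} : Set (ℚ × ℚ))
        ⊆ {p : ℚ × ℚ | p.2 ≤ (a' + b') * p.1 - a' * b'} := by
      apply convexHull_min _ hcvx
      intro p hp
      simp only [Set.mem_insert_iff, Set.mem_singleton_iff] at hp
      rcases hp with h | h | h <;> subst h <;> simp only [Set.mem_setOf_eq] <;> nlinarith
    have hma : (a, a ^ 2) ∈ convexHull ℚ ({(a, a ^ 2), ((a + b) / 2, a * b), (b, b ^ 2)} : Set (ℚ × ℚ)) :=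
      subset_convexHull ℚ _ (by simp)
    have hmb : (b, b ^ 2) ∈ convexHull ℚ ({(a, a ^ 2), ((a + b) / 2, a * b), (b, b ^ 2)} : Set (ℚ × ℚ)) :=
      subset_convexHull ℚ _ (by simp)
    have ha := hsub (h hma)
    have hb := hsub (h hmb)
    simp only [Set.mem_setOf_eq] at ha hb
    exact Set.Icc_subset_Icc (by nlinarith) (by nlinarith)
  · intro h
    have h1 : a' ≤ a ∧ b ≤ b' := by
      have := h ⟨le_refl a, hab.le⟩
      have := h ⟨hab.le, le_refl b⟩
      exact ⟨(h ⟨le_refl a, hab.le⟩).1, (h ⟨hab.le, le_refl b⟩).2⟩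
    obtain ⟨ha', hb'⟩ := h1
    apply convexHull_min _ (convex_convexHull ℚ _)
    intro p hp
    simp only [Set.mem_insert_iff, Set.mem_singleton_iff] at hp
    rcases hp with h | h | h <;> subst h
    · exact mem_tri a' b' hab' a (a ^ 2) (by nlinarith) (by nlinarith) (by nlinarith)
    · exact mem_tri a' b' hab' ((a + b) / 2) (a * b) (by nlinarith) (by nlinarith) (by nlinarith)
    · exact mem_tri a' b' hab' b (b ^ 2) (by nlinarith) (by nlinarith) (by nlinarith)
end

section
/- The inclusion order on convex hulls of finite sets of points in Q² is a universal partial order: every countable partial order embeds into it. -/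
/-!
Points are placed just under the parabola `y = t - t²`, at `below t D = (t, t - t² - D)`. Such a
point is in the hull of a set containing the base `[0, 1] × {0}` as soon as it lies under a chord of
the set; it is outside the hull as soon as the whole set lies strictly under the tangent to the
parabola at `t`, lowered by `D`.

The nodes `v` of the tree `List ℕ` get nested zones (an interval of abscissae and a depth). A zone
is a whole sagitta deeper than its parent, so the two corners of a zone dominate all its proper
descendants; and siblings are far apart compared to their widths, so the tangent at a corner of a
zone separates it from every zone in another branch.

Enumerate `P` by `e` with a section `m`. An element `x` is coded by its address: the characteristic
word of its up-set among the stages `≤ m x`, followed by an end marker. The point set of `y` is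
made of the corners of the addresses of the elements below `y` enumerated by stage `m y`, and of the
corners of the words of all up-sets of stages `≤ j ≤ m y` that meet the down-set of `y`. If `x ≤ y`,
every node of `x` has a prefix among the nodes of `y`: an up-set meeting `↓x` meets `↓y`, so up to
stage `m y` it is a node of `y`. If `x ≰ y`, the address of `x` forks from every node of `y`.
-/

open Set

namespace HullEmbedding

def parabola (t : ℚ) : ℚ := t - t ^ 2

def below (t D : ℚ) : ℚ × ℚ := (t, parabola t - D)

lemma mem_segment_vertical {x y₁ y₂ y : ℚ} (h₁ : y₁ ≤ y) (h₂ : y ≤ y₂) :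
    (x, y) ∈ segment ℚ (x, y₁) (x, y₂) := by
  rw [← Prod.image_mk_segment_right, segment_eq_Icc (h₁.trans h₂)]
  exact mem_image_of_mem _ ⟨h₁, h₂⟩

lemma mem_segment_horizontal {x₁ x₂ x y : ℚ} (h₁ : x₁ ≤ x) (h₂ : x ≤ x₂) :
    (x, y) ∈ segment ℚ (x₁, y) (x₂, y) := by
  rw [← Prod.image_mk_segment_left, segment_eq_Icc (h₁.trans h₂)]
  exact mem_image_of_mem _ ⟨h₁, h₂⟩

lemma below_chord_mem_segment {l r b d : ℚ} (hlb : l ≤ b) (hbr : b ≤ r) (hlr : l < r) :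
    (b, parabola b - (b - l) * (r - b) - d) ∈ segment ℚ (below l d) (below r d) := by
  have hrl : r - l ≠ 0 := by linarith
  refine ⟨(r - b) / (r - l), (b - l) / (r - l), by positivity, by positivity, ?_, ?_⟩
  · field_simp; ring
  · simp only [below, parabola, Prod.smul_mk, Prod.mk_add_mk, smul_eq_mul, Prod.mk.injEq]
    constructor <;> field_simp <;> ring

/-- The point lies on the vertical segment between the base `[0, 1] × {0}` and the chord through
`below l d` and `below r d`. -/
lemma below_mem_convexHull {S : Set (ℚ × ℚ)} {l r b d D : ℚ} (hl : 0 ≤ l) (hlb : l ≤ b)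
    (hbr : b ≤ r) (hr : r ≤ 1) (hlr : l < r) (hD : (b - l) * (r - b) + d ≤ D)
    (hD' : D ≤ parabola b) (h₀ : below 0 0 ∈ S) (h₁ : below 1 0 ∈ S) (hdl : below l d ∈ S)
    (hdr : below r d ∈ S) : below b D ∈ convexHull ℚ S := by
  have hconv := convex_convexHull ℚ S
  have hbase : (b, (0 : ℚ)) ∈ convexHull ℚ S := by
    refine hconv.segment_subset (subset_convexHull ℚ S h₀) (subset_convexHull ℚ S h₁) ?_
    simpa [below, parabola] using mem_segment_horizontal (y := 0) (hl.trans hlb) (hbr.trans hr)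
  have hchord : (b, parabola b - (b - l) * (r - b) - d) ∈ convexHull ℚ S :=
    hconv.segment_subset (subset_convexHull ℚ S hdl) (subset_convexHull ℚ S hdr)
      (below_chord_mem_segment hlb hbr hlr)
  exact hconv.segment_subset hbase hchord (mem_segment_vertical (by linarith) (by linarith))

/-- The separating line is the tangent to the parabola at `a`, lowered by `Δ`. -/
lemma below_not_mem_convexHull {S : Set (ℚ × ℚ)} {a Δ : ℚ}
    (h : ∀ p ∈ S, ∃ b D, p = below b D ∧ Δ - D < (a - b) ^ 2) :
    below a Δ ∉ convexHull ℚ S := by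
  set f : ℚ × ℚ → ℚ := fun p => p.2 - (1 - 2 * a) * p.1
  have hf : IsLinearMap ℚ f :=
    ⟨fun p q => by simp only [f, Prod.fst_add, Prod.snd_add]; ring,
     fun c p => by simp only [f, Prod.smul_fst, Prod.smul_snd, smul_eq_mul]; ring⟩
  have hS : S ⊆ {p | f p < f (below a Δ)} := by
    intro p hp
    obtain ⟨b, D, rfl, hbD⟩ := h p hp
    have key : f (below a Δ) - f (below b D) = (a - b) ^ 2 - (Δ - D) := by
      simp only [f, below, parabola]; ring
    simp only [mem_ofPred_eq]
    linarith
  intro hmem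
  exact lt_irrefl (f (below a Δ)) (convexHull_min hS (convex_halfSpace_lt hf _) hmem)

lemma exists_fork_of_not_prefix {α : Type*} :
    ∀ {v u : List α}, ¬ v <+: u → ¬ u <+: v →
      ∃ w c₁ c₂ t₁ t₂, c₁ ≠ c₂ ∧ v = w ++ c₁ :: t₁ ∧ u = w ++ c₂ :: t₂
  | [], _, h, _ => (h List.nil_prefix).elim
  | _, [], _, h => (h List.nil_prefix).elim
  | a :: v, b :: u, h₁, h₂ => by
    by_cases hab : a = b
    · subst hab
      obtain ⟨w, c₁, c₂, t₁, t₂, hc, rfl, rfl⟩ := exists_fork_of_not_prefix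
        (mt (List.prefix_cons_inj a).2 h₁) (mt (List.prefix_cons_inj a).2 h₂)
      exact ⟨a :: w, c₁, c₂, t₁, t₂, hc, rfl, rfl⟩
    · exact ⟨[], a, b, v, u, hab, rfl, rfl⟩

lemma length_eq_of_append_singleton_prefix {α : Type*} {l₁ l₂ : List α} {a b : α} (ha : a ∉ l₂)
    (h : l₁ ++ [a] <+: l₂ ++ [b]) : l₁.length = l₂.length := by
  refine le_antisymm (by simpa using h.length_le) (not_lt.1 fun hlt => ha ?_)
  have := h.getElem (i := l₁.length) (by simp)
  rw [List.getElem_append_right le_rfl, List.getElem_append_left hlt] at this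
  simp only [Nat.sub_self, List.getElem_cons_zero] at this
  exact this ▸ List.getElem_mem hlt

structure Zone where
  left : ℚ
  width : ℚ
  depth : ℚ

namespace Zone

def right (z : Zone) : ℚ := z.left + z.width

/-- Children are scaled by `2⁻¹ ^ c`, which keeps distinct children far apart relative to their
widths. -/
def child (z : Zone) (c : ℕ) : Zone where
  left := z.left + z.width * 2⁻¹ ^ c / 4
  width := z.width * 2⁻¹ ^ c / 16
  depth := z.depth + z.width ^ 2 / 4

def descend (z : Zone) (v : List ℕ) : Zone := v.foldl child z

def root : Zone := ⟨1 / 3, 1 / 3, 0⟩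

def corners (z : Zone) : Finset (ℚ × ℚ) := {below z.left z.depth, below z.right z.depth}

lemma left_mem_Icc {z : Zone} (hw : 0 ≤ z.width) : z.left ∈ Icc z.left z.right :=
  ⟨le_rfl, le_add_of_nonneg_right hw⟩

lemma right_mem_Icc {z : Zone} (hw : 0 ≤ z.width) : z.right ∈ Icc z.left z.right :=
  ⟨le_add_of_nonneg_right hw, le_rfl⟩

lemma exists_of_mem_corners {z : Zone} (hw : 0 ≤ z.width) {p : ℚ × ℚ} (hp : p ∈ z.corners) :
    ∃ b ∈ Icc z.left z.right, p = below b z.depth := by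
  simp only [corners, Finset.mem_insert, Finset.mem_singleton] at hp
  rcases hp with rfl | rfl
  · exact ⟨z.left, left_mem_Icc hw, rfl⟩
  · exact ⟨z.right, right_mem_Icc hw, rfl⟩

structure Within (z' z : Zone) : Prop where
  left_le : z.left ≤ z'.left
  right_le : z'.right ≤ z.right
  depth_le : z.depth ≤ z'.depth
  potential_le : z'.depth + z'.width ^ 2 ≤ z.depth + z.width ^ 2

lemma Within.refl (z : Zone) : z.Within z := ⟨le_rfl, le_rfl, le_rfl, le_rfl⟩

lemma Within.trans {z'' z' z : Zone} (h₁ : z''.Within z') (h₂ : z'.Within z) : z''.Within z :=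
  ⟨h₂.1.trans h₁.1, h₁.2.trans h₂.2, h₂.3.trans h₁.3, h₁.4.trans h₂.4⟩

lemma Within.Icc_subset {z' z : Zone} (h : z'.Within z) :
    Icc z'.left z'.right ⊆ Icc z.left z.right :=
  Icc_subset_Icc h.left_le h.right_le

lemma width_child_pos {z : Zone} (hw : 0 < z.width) (c : ℕ) : 0 < (z.child c).width := by
  simp only [child]; positivity

lemma child_within {z : Zone} (hw : 0 < z.width) (c : ℕ) : (z.child c).Within z := by
  have hρ : (2⁻¹ : ℚ) ^ c ≤ 1 := pow_le_one₀ (by norm_num) (by norm_num)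
  have hwρ : z.width * 2⁻¹ ^ c ≤ z.width := mul_le_of_le_one_right hw.le hρ
  have hwρ₀ : 0 ≤ z.width * 2⁻¹ ^ c := by positivity
  constructor <;> simp only [child, right] <;> nlinarith

@[simp] lemma descend_cons (z : Zone) (c : ℕ) (v : List ℕ) :
    z.descend (c :: v) = (z.child c).descend v := rfl

lemma descend_append (z : Zone) (u v : List ℕ) : z.descend (u ++ v) = (z.descend u).descend v :=
  List.foldl_append

lemma width_descend_pos {z : Zone} (hw : 0 < z.width) (v : List ℕ) : 0 < (z.descend v).width := by
  induction v generalizing z with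
  | nil => exact hw
  | cons c v ih => exact ih (width_child_pos hw c)

lemma descend_within {z : Zone} (hw : 0 < z.width) (v : List ℕ) : (z.descend v).Within z := by
  induction v generalizing z with
  | nil => exact Within.refl z
  | cons c v ih => exact (ih (width_child_pos hw c)).trans (child_within hw c)

/-- The sagitta of a chord of the parabola of width `w` is `w ^ 2 / 4`. -/
lemma sagitta_add_depth_le {z : Zone} (hw : 0 < z.width) (b : ℚ) (c : ℕ) (v : List ℕ) :
    (b - z.left) * (z.right - b) + z.depth ≤ (z.descend (c :: v)).depth := by
  have h := (descend_within (width_child_pos hw c) v).depth_le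
  simp only [descend_cons, child, right] at h ⊢
  nlinarith [sq_nonneg (2 * b - 2 * z.left - z.width)]

lemma width_child_lt_sub {z : Zone} (hw : 0 < z.width) {c₁ c₂ : ℕ} (hc : c₁ < c₂) {a b : ℚ}
    (ha : a ∈ Icc (z.child c₁).left (z.child c₁).right)
    (hb : b ∈ Icc (z.child c₂).left (z.child c₂).right) :
    (z.child c₂).width ≤ (z.child c₁).width ∧ (z.child c₁).width < a - b := by
  have hρ : (2⁻¹ : ℚ) ^ c₂ ≤ 2⁻¹ ^ c₁ / 2 := by
    rw [div_eq_mul_inv, ← pow_succ]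
    exact pow_le_pow_of_le_one (by norm_num) (by norm_num) hc
  have hwρ : z.width * 2⁻¹ ^ c₂ ≤ z.width * 2⁻¹ ^ c₁ / 2 := by
    rw [mul_div_assoc]; exact mul_le_mul_of_nonneg_left hρ hw.le
  have hwρ₀ : 0 < z.width * 2⁻¹ ^ c₁ := by positivity
  simp only [child, right, mem_Icc] at ha hb ⊢
  constructor <;> linarith

lemma width_child_lt_abs_sub {z : Zone} (hw : 0 < z.width) {c₁ c₂ : ℕ} (hc : c₁ ≠ c₂) {a b : ℚ}
    (ha : a ∈ Icc (z.child c₁).left (z.child c₁).right)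
    (hb : b ∈ Icc (z.child c₂).left (z.child c₂).right) :
    (z.child c₁).width < |a - b| := by
  rcases hc.lt_or_gt with hc | hc
  · exact (width_child_lt_sub hw hc ha hb).2.trans_le (le_abs_self _)
  · obtain ⟨hle, hlt⟩ := width_child_lt_sub hw hc hb ha
    rw [abs_sub_comm]
    exact hle.trans_lt (hlt.trans_le (le_abs_self _))

lemma depth_sub_lt_sq {z : Zone} (hw : 0 < z.width) {c₁ c₂ : ℕ} (hc : c₁ ≠ c₂) (v₁ v₂ : List ℕ)
    {a b : ℚ} (ha : a ∈ Icc (z.descend (c₁ :: v₁)).left (z.descend (c₁ :: v₁)).right)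
    (hb : b ∈ Icc (z.descend (c₂ :: v₂)).left (z.descend (c₂ :: v₂)).right) :
    (z.descend (c₁ :: v₁)).depth - (z.descend (c₂ :: v₂)).depth < (a - b) ^ 2 := by
  simp only [descend_cons] at ha hb ⊢
  have h₁ := descend_within (width_child_pos hw c₁) v₁
  have h₂ := descend_within (width_child_pos hw c₂) v₂
  have hgap := width_child_lt_abs_sub hw hc (h₁.Icc_subset ha) (h₂.Icc_subset hb)
  have hsq : (z.child c₁).width ^ 2 < (a - b) ^ 2 := by
    rw [← sq_abs (a - b)]
    exact pow_lt_pow_left₀ hgap (width_child_pos hw c₁).le two_ne_zero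
  have hdepth : (z.child c₁).depth = (z.child c₂).depth := rfl
  linarith [h₁.potential_le, h₂.depth_le, sq_nonneg ((z.child c₁).descend v₁).width]

end Zone

def zone (v : List ℕ) : Zone := Zone.root.descend v

lemma width_zone_pos (v : List ℕ) : 0 < (zone v).width :=
  Zone.width_descend_pos (by norm_num [Zone.root]) v

lemma zone_append (u v : List ℕ) : zone (u ++ v) = (zone u).descend v :=
  Zone.descend_append _ _ _

lemma zone_bounds (v : List ℕ) :
    1 / 3 ≤ (zone v).left ∧ (zone v).right ≤ 2 / 3 ∧ (zone v).depth < 1 / 9 := by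
  have h : (zone v).Within Zone.root := Zone.descend_within (by norm_num [Zone.root]) v
  have hw := width_zone_pos v
  have hr := h.right_le
  have hp := h.potential_le
  simp only [Zone.root, Zone.right] at h hr hp ⊢
  exact ⟨h.left_le, by linarith, by nlinarith⟩

lemma depth_le_parabola {v : List ℕ} {b : ℚ} (hb : b ∈ Icc (zone v).left (zone v).right) :
    (zone v).depth ≤ parabola b := by
  obtain ⟨hl, hr, hd⟩ := zone_bounds v
  simp only [parabola, mem_Icc, Zone.right] at hb hr ⊢
  nlinarith

def realize (N : Finset (List ℕ)) : Finset (ℚ × ℚ) :=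
  {below 0 0, below 1 0} ∪ N.biUnion fun v => (zone v).corners

lemma mem_realize {N : Finset (List ℕ)} {p : ℚ × ℚ} :
    p ∈ realize N ↔ p = below 0 0 ∨ p = below 1 0 ∨ ∃ v ∈ N, p ∈ (zone v).corners := by
  simp [realize]

lemma below_mem_convexHull_realize {N : Finset (List ℕ)} {u : List ℕ} (hu : u ∈ N) (c : ℕ)
    (v : List ℕ) {b : ℚ} (hb : b ∈ Icc (zone (u ++ c :: v)).left (zone (u ++ c :: v)).right) :
    below b (zone (u ++ c :: v)).depth ∈ convexHull ℚ (realize N : Set (ℚ × ℚ)) := by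
  have hw := width_zone_pos u
  have hbu := (Zone.descend_within hw (c :: v)).Icc_subset (zone_append u _ ▸ hb)
  have hcorner : ∀ p ∈ (zone u).corners, p ∈ realize N := fun p hp =>
    mem_realize.2 (Or.inr (Or.inr ⟨u, hu, hp⟩))
  obtain ⟨hl, hr, -⟩ := zone_bounds u
  refine below_mem_convexHull (d := (zone u).depth) (by linarith) hbu.1 hbu.2 (by linarith)
    (by simp [Zone.right, hw]) ?_ (depth_le_parabola hb) (by simp [realize]) (by simp [realize])
    (hcorner _ (by simp [Zone.corners])) (hcorner _ (by simp [Zone.corners]))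
  rw [zone_append]
  exact Zone.sagitta_add_depth_le hw b c v

lemma realize_subset_convexHull {N₁ N₂ : Finset (List ℕ)} (h : ∀ v ∈ N₁, ∃ u ∈ N₂, u <+: v) :
    (realize N₁ : Set (ℚ × ℚ)) ⊆ convexHull ℚ (realize N₂ : Set (ℚ × ℚ)) := by
  intro p hp
  rcases mem_realize.1 hp with rfl | rfl | ⟨v, hv, hp⟩
  · exact subset_convexHull ℚ _ (mem_realize.2 (Or.inl rfl))
  · exact subset_convexHull ℚ _ (mem_realize.2 (Or.inr (Or.inl rfl)))
  obtain ⟨u, hu, t, rfl⟩ := h v hv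
  rcases t with _ | ⟨c, t⟩
  · rw [List.append_nil] at hp
    exact subset_convexHull ℚ _ (mem_realize.2 (Or.inr (Or.inr ⟨u, hu, hp⟩)))
  · obtain ⟨b, hb, rfl⟩ := Zone.exists_of_mem_corners (width_zone_pos _).le hp
    exact below_mem_convexHull_realize hu c t hb

lemma below_left_not_mem_convexHull_realize {N : Finset (List ℕ)} {v : List ℕ}
    (hv : ∀ u ∈ N, ¬ v <+: u ∧ ¬ u <+: v) :
    below (zone v).left (zone v).depth ∉ convexHull ℚ (realize N : Set (ℚ × ℚ)) := by
  obtain ⟨hl, hr, hd⟩ := zone_bounds v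
  have hw := width_zone_pos v
  simp only [Zone.right] at hr
  refine below_not_mem_convexHull fun p hp => ?_
  rcases mem_realize.1 hp with rfl | rfl | ⟨u, hu, hp⟩
  · exact ⟨0, 0, rfl, by nlinarith⟩
  · exact ⟨1, 0, rfl, by nlinarith⟩
  obtain ⟨b, hb, rfl⟩ := Zone.exists_of_mem_corners (width_zone_pos _).le hp
  obtain ⟨w, c₁, c₂, t₁, t₂, hc, rfl, rfl⟩ := exists_fork_of_not_prefix (hv u hu).1 (hv u hu).2
  refine ⟨b, _, rfl, ?_⟩
  have ha := Zone.left_mem_Icc (width_zone_pos (w ++ c₁ :: t₁)).le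
  simp only [zone_append] at ha hb ⊢
  exact Zone.depth_sub_lt_sq (width_zone_pos w) hc t₁ t₂ ha hb

def trace (A : Finset ℕ) (j : ℕ) : List ℕ :=
  (List.range (j + 1)).map fun s => if s ∈ A then 1 else 0

lemma length_trace (A : Finset ℕ) (j : ℕ) : (trace A j).length = j + 1 := by
  simp [trace]

lemma trace_prefix (A : Finset ℕ) {j k : ℕ} (h : j ≤ k) : trace A j <+: trace A k := by
  obtain ⟨d, rfl⟩ := Nat.exists_eq_add_of_le h
  rw [trace, trace, show j + d + 1 = j + 1 + d by omega, @List.range_add (j + 1) d,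
    List.map_append]
  exact List.prefix_append _ _

lemma trace_filter_le (A : Finset ℕ) (j : ℕ) : trace (A.filter (· ≤ j)) j = trace A j := by
  refine List.map_congr_left fun s hs => ?_
  rw [List.mem_range, Nat.lt_succ_iff] at hs
  simp [hs]

lemma two_not_mem_trace (A : Finset ℕ) (j : ℕ) : 2 ∉ trace A j := by
  simp only [trace, List.mem_map, not_exists, not_and]
  intro s _
  split_ifs <;> norm_num

lemma mem_of_trace_prefix {A B : Finset ℕ} {j k s : ℕ} (h : trace A j <+: trace B k ++ [2])
    (hs : s ∈ A) (hsj : s ≤ j) : s ∈ B := by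
  have hlt : s < (trace A j).length := by rw [length_trace]; omega
  have := h.getElem hlt
  simp only [trace, List.getElem_map, List.getElem_range, hs, if_true] at this
  rw [List.getElem_append] at this
  split_ifs at this with hk
  · simp only [List.getElem_map, List.getElem_range] at this
    split_ifs at this with hB
    exact hB
  · simp at this

section Coding

variable {P : Type*} [Preorder P] (e : ℕ → P) (m : P → ℕ)

open Classical in
noncomputable def upStages (x : P) (j : ℕ) : Finset ℕ := (Finset.range (j + 1)).filter (x ≤ e ·)

noncomputable def address (x : P) : List ℕ := trace (upStages e x (m x)) (m x) ++ [2]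

def IsUpperAt (j : ℕ) (A : Finset ℕ) : Prop := ∀ s ∈ A, s ≤ j ∧ ∀ t ≤ j, e s ≤ e t → t ∈ A

open Classical in
noncomputable def nodes (y : P) : Finset (List ℕ) :=
  ((Finset.range (m y + 1)).filter (e · ≤ y)).image (fun s => address e m (e s)) ∪
    (Finset.range (m y + 1)).biUnion fun j =>
      ((Finset.range (j + 1)).powerset.filter fun A => IsUpperAt e j A ∧ ∃ s ∈ A, e s ≤ y).image
        (trace · j)

variable {e m}

lemma mem_upStages {x : P} {j s : ℕ} : s ∈ upStages e x j ↔ s ≤ j ∧ x ≤ e s := by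
  simp [upStages]

lemma mem_nodes {y : P} {v : List ℕ} :
    v ∈ nodes e m y ↔ (∃ s ≤ m y, e s ≤ y ∧ address e m (e s) = v) ∨
      ∃ j ≤ m y, ∃ A, IsUpperAt e j A ∧ (∃ s ∈ A, e s ≤ y) ∧ trace A j = v := by
  simp only [nodes, Finset.mem_union, Finset.mem_image, Finset.mem_filter, Finset.mem_range,
    Finset.mem_biUnion, Finset.mem_powerset, Nat.lt_succ_iff]
  refine or_congr (by simp only [and_assoc]) (exists_congr fun j => and_congr_right fun _ => ?_)
  refine ⟨fun ⟨A, ⟨_, hA⟩, hv⟩ => ⟨A, hA.1, hA.2, hv⟩, fun ⟨A, hA, hs, hv⟩ => ⟨A, ⟨?_, hA, hs⟩, hv⟩⟩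
  intro s hs
  simpa [Nat.lt_succ_iff] using (hA s hs).1

lemma isUpperAt_upStages (x : P) (j : ℕ) : IsUpperAt e j (upStages e x j) := by
  intro s hs
  rw [mem_upStages] at hs
  exact ⟨hs.1, fun t ht hst => mem_upStages.2 ⟨ht, hs.2.trans hst⟩⟩

lemma IsUpperAt.filter_le {j k : ℕ} {A : Finset ℕ} (hA : IsUpperAt e j A) (hk : k ≤ j) :
    IsUpperAt e k (A.filter (· ≤ k)) := by
  intro s hs
  rw [Finset.mem_filter] at hs
  exact ⟨hs.2, fun t ht hst => Finset.mem_filter.2 ⟨(hA s hs.1).2 t (ht.trans hk) hst, ht⟩⟩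

lemma trace_mem_nodes (hem : Function.LeftInverse e m) {y : P} {j : ℕ} {A : Finset ℕ}
    (hA : IsUpperAt e j A) {s : ℕ} (hs : s ∈ A) (hsy : e s ≤ y) (hj : m y ≤ j) :
    trace A (m y) ∈ nodes e m y := by
  have hy : m y ∈ A.filter (· ≤ m y) :=
    Finset.mem_filter.2 ⟨(hA s hs).2 (m y) hj (by rwa [hem y]), le_rfl⟩
  exact mem_nodes.2 (Or.inr ⟨m y, le_rfl, _, hA.filter_le hj, ⟨m y, hy, (hem y).le⟩,
    trace_filter_le A (m y)⟩)

lemma address_mem_nodes (hem : Function.LeftInverse e m) (x : P) : address e m x ∈ nodes e m x :=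
  mem_nodes.2 (Or.inl ⟨m x, le_rfl, (hem x).le, by rw [hem x]⟩)

lemma exists_prefix_mem_nodes (hem : Function.LeftInverse e m) {x y : P} (hxy : x ≤ y)
    {v : List ℕ} (hv : v ∈ nodes e m x) : ∃ u ∈ nodes e m y, u <+: v := by
  rcases mem_nodes.1 hv with ⟨s, -, hsx, rfl⟩ | ⟨j, -, A, hA, ⟨s, hs, hsx⟩, rfl⟩
  · set u := e s
    have huy : e (m u) ≤ y := by rw [hem u]; exact hsx.trans hxy
    rcases le_or_gt (m u) (m y) with hu | hu
    · exact ⟨_, mem_nodes.2 (Or.inl ⟨m u, hu, huy, rfl⟩), by rw [hem u]⟩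
    · refine ⟨_, trace_mem_nodes hem (isUpperAt_upStages u (m u))
        (mem_upStages.2 ⟨le_rfl, (hem u).ge⟩) huy hu.le, ?_⟩
      exact (trace_prefix _ hu.le).trans (List.prefix_append _ _)
  · rcases le_or_gt j (m y) with hj | hj
    · exact ⟨_, mem_nodes.2 (Or.inr ⟨j, hj, A, hA, ⟨s, hs, hsx.trans hxy⟩, rfl⟩), List.prefix_rfl⟩
    · exact ⟨_, trace_mem_nodes hem hA hs (hsx.trans hxy) hj.le, trace_prefix A hj.le⟩

lemma eq_of_address_prefix (hem : Function.LeftInverse e m) {x u : P}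
    (h : address e m x <+: address e m u) : x = u := by
  have := length_eq_of_append_singleton_prefix (two_not_mem_trace _ _) h
  rw [length_trace, length_trace] at this
  rw [← hem x, ← hem u, Nat.succ_injective this]

lemma not_prefix_address (hem : Function.LeftInverse e m) {x y : P} (hxy : ¬ x ≤ y)
    {u : List ℕ} (hu : u ∈ nodes e m y) : ¬ address e m x <+: u ∧ ¬ u <+: address e m x := by
  rcases mem_nodes.1 hu with ⟨s, -, hsy, rfl⟩ | ⟨j, -, A, hA, ⟨s, hs, hsy⟩, rfl⟩
  · constructor <;> intro h
    · exact hxy (eq_of_address_prefix hem h ▸ hsy)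
    · exact hxy ((eq_of_address_prefix hem h).symm ▸ hsy)
  · constructor <;> intro h
    · exact two_not_mem_trace A j (h.subset (by simp [address]))
    · have := mem_of_trace_prefix h hs (hA s hs).1
      exact hxy ((mem_upStages.1 this).2.trans hsy)

theorem le_iff_convexHull_subset (hem : Function.LeftInverse e m) {x y : P} :
    x ≤ y ↔ convexHull ℚ (realize (nodes e m x) : Set (ℚ × ℚ)) ⊆
      convexHull ℚ (realize (nodes e m y) : Set (ℚ × ℚ)) := by
  refine ⟨fun hxy => convexHull_min ?_ (convex_convexHull ℚ _), fun h => ?_⟩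
  · exact realize_subset_convexHull fun v hv => exists_prefix_mem_nodes hem hxy hv
  by_contra hxy
  refine below_left_not_mem_convexHull_realize (fun u hu => not_prefix_address hem hxy hu) (h ?_)
  refine subset_convexHull ℚ _ (mem_realize.2 (Or.inr (Or.inr ⟨_, address_mem_nodes hem x, ?_⟩)))
  simp [Zone.corners]

end Coding

end HullEmbedding

open HullEmbedding

/-- The inclusion order on convex hulls of finite sets of points in `ℚ²` is
universal: every countable partial order embeds into it. -/
theorem convexHull_order_universal (P : Type) [PartialOrder P] [Countable P] :
    ∃ φ : P → Finset (ℚ × ℚ),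
      Function.Injective (fun x => convexHull ℚ (φ x : Set (ℚ × ℚ))) ∧
      (∀ x y, x ≤ y ↔
        convexHull ℚ (φ x : Set (ℚ × ℚ)) ⊆ convexHull ℚ (φ y : Set (ℚ × ℚ))) := by
  rcases isEmpty_or_nonempty P with hP | hP
  · exact ⟨isEmptyElim, fun x => isEmptyElim x, fun x => isEmptyElim x⟩
  obtain ⟨e, he⟩ := exists_surjective_nat P
  have hem : Function.LeftInverse e (Function.surjInv he) := Function.rightInverse_surjInv he
  refine ⟨fun x => realize (nodes e (Function.surjInv he) x), ?_,
    fun x y => le_iff_convexHull_subset hem⟩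
  exact (OrderEmbedding.ofMapLEIff (α := P) (β := Set (ℚ × ℚ)) _
    fun x y => (le_iff_convexHull_subset hem).symm).injective
end

section
/- The partial order of convex piecewise linear functions on the rational interval (0,1) with finitely many rational breakpoints, ordered pointwise, is universal: every countable partial order embeds into it. -/
/-!
Code an element by a finite set of nodes of the infinite binary tree, and compare codes in the
Smyth order: `S ≤ T` iff every node of `S` has an ancestor (or itself) in `T`.

Every countable preorder embeds into this order. Enumerate it as `e 0, e 1, …` and build the
codes one at a time, keeping them generic: at stage `n`, every up-set of `{e 0, …, e (n - 1)}` is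
the set of those codes that cover some node of depth `n`. The code of `e n` is made of the codes
of the earlier elements below it, together with a child of every node of depth `n` that is covered
by the codes of all earlier elements above `e n` and of none below it.

To each node `σ` attach a line, decreasing along the tree, such that at a point `center σ` of
`(0,1)` the line of `σ` lies strictly above the line of every node that is not an ancestor of `σ`.
Then `S ↦ max_{σ ∈ S} line σ` turns the Smyth order into the pointwise order on `(0,1)`, and a
maximum of finitely many lines is convex and piecewise linear.
-/

/-- `f : ℚ → ℚ` is piecewise linear on `(0,1)` with finitely many rational
breakpoints: away from a finite set of breakpoints it is given by linear pieces. -/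
def IsPWL (f : ℚ → ℚ) : Prop :=
  ∃ s : Finset ℚ, ∀ a b : ℚ, 0 ≤ a → b ≤ 1 → a < b →
    (∀ c ∈ s, ¬ (a < c ∧ c < b)) →
    ∃ m q : ℚ, ∀ x : ℚ, a < x → x < b → f x = m * x + q

lemma crossing_mem_Ioo {l r m x a₁ c₁ a₂ c₂ : ℚ} (hm : m ∈ Set.Ioo l r) (hx : x ∈ Set.Ioo l r)
    (hm' : a₂ * m + c₂ ≤ a₁ * m + c₁) (hx' : a₁ * x + c₁ < a₂ * x + c₂) :
    (c₂ - c₁) / (a₁ - a₂) ∈ Set.Ioo l r := by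
  have hd : a₁ - a₂ ≠ 0 := by
    intro hd
    rw [sub_eq_zero] at hd
    subst hd
    linarith
  set x₀ := (c₂ - c₁) / (a₁ - a₂)
  have hx₀ : (a₁ - a₂) * x₀ = c₂ - c₁ := mul_div_cancel₀ _ hd
  obtain ⟨hml, hmr⟩ := hm
  obtain ⟨hxl, hxr⟩ := hx
  constructor
  · by_contra! h; nlinarith
  · by_contra! h; nlinarith

theorem isPWL_finset_sup' {ι : Type*} (S : Finset ι) (hS : S.Nonempty) {f : ι → ℚ → ℚ}
    (hf : ∀ i, ∃ a c : ℚ, ∀ t, f i t = a * t + c) : IsPWL (S.sup' hS f) := by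
  classical
  choose a c hac using hf
  -- On an interval free of crossing points, a line that is highest at one point stays highest.
  refine ⟨(S ×ˢ S).image fun p => (c p.2 - c p.1) / (a p.1 - a p.2), ?_⟩
  intro l r _ _ hlr hgap
  obtain ⟨m, hm⟩ := exists_between hlr
  obtain ⟨i, hi, hmax⟩ := S.exists_mem_eq_sup' hS fun j => f j m
  refine ⟨a i, c i, fun x hlx hxr => ?_⟩
  rw [Finset.sup'_apply, ← hac i x]
  refine le_antisymm (S.sup'_le _ _ fun j hj => ?_) (S.le_sup' (f · x) hi)
  by_contra! hlt
  have hmid : f j m ≤ f i m := hmax ▸ S.le_sup' (f · m) hj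
  rw [hac j, hac i] at hmid hlt
  exact hgap _ (Finset.mem_image_of_mem _ (Finset.mk_mem_product hi hj))
    (crossing_mem_Ioo hm ⟨hlx, hxr⟩ hmid hlt)

namespace PWL

open Set

-- A node of the binary tree is the list of bits on the path from it up to the root: `b :: ρ` is
-- the `b`-child of `ρ`, and the ancestors of `σ`, `σ` included, are its suffixes.
def Covers {α : Type*} (S : Finset (List α)) (σ : List α) : Prop := ∃ τ ∈ S, τ <:+ σ

def Smyth {α : Type*} (S T : Finset (List α)) : Prop := ∀ σ ∈ S, Covers T σ

section Smyth

variable {α : Type*} {S T U : Finset (List α)} {σ : List α}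

lemma Smyth.covers (h : Smyth S T) (hS : Covers S σ) : Covers T σ :=
  let ⟨τ, hτ, hτσ⟩ := hS
  let ⟨υ, hυ, hυτ⟩ := h τ hτ
  ⟨υ, hυ, hυτ.trans hτσ⟩

lemma Smyth.trans (hST : Smyth S T) (hTU : Smyth T U) : Smyth S U :=
  fun σ hσ => hTU.covers (hST σ hσ)

lemma smyth_of_subset (h : S ⊆ T) : Smyth S T :=
  fun σ hσ => ⟨σ, h hσ, List.suffix_refl σ⟩

lemma covers_cons_iff (hS : ∀ τ ∈ S, τ.length ≤ σ.length) (a : α) :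
    Covers S (a :: σ) ↔ Covers S σ := by
  refine exists_congr fun τ => and_congr_right fun hτ =>
    ⟨fun h => ?_, fun h => h.trans (List.suffix_cons a σ)⟩
  refine (List.suffix_cons_iff.mp h).resolve_left fun hτσ => ?_
  have := hS τ hτ
  rw [hτσ, List.length_cons] at this
  omega

end Smyth

def width (k : ℕ) : ℚ := (1 / 4) ^ k

-- All penalties below depth `k` add up to at most `4 * weight (k + 1)` (`line_sub_line_le`), less
-- than the gap `weight k * width k / 4` between the two penalties at depth `k` (`penalty_gap`).
def weight : ℕ → ℚ
  | 0 => 1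
  | k + 1 => weight k * width k / 32

-- `center σ` is the midpoint of an interval of length `width σ.length`; the intervals of
-- `true :: ρ` and `false :: ρ` are the left and right quarters of the interval of `ρ`.
def center : List Bool → ℚ
  | [] => 1 / 2
  | true :: ρ => center ρ - 3 / 8 * width ρ.length
  | false :: ρ => center ρ + 3 / 8 * width ρ.length

-- The two penalties at `ρ` agree at `center ρ`; to its left, where the subtree of `true :: ρ`
-- lies, the `true` penalty is the smaller one.
def penalty (ρ : List Bool) : Bool → ℚ → ℚ
  | true, _ => weight ρ.length
  | false, t => weight ρ.length * (1 + center ρ - t)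

def line : List Bool → ℚ → ℚ
  | [], _ => 0
  | b :: ρ, t => line ρ t - penalty ρ b t

lemma width_pos (k : ℕ) : 0 < width k := by
  unfold width; positivity

lemma width_succ (k : ℕ) : width (k + 1) = width k / 4 := by
  rw [width, pow_succ, width]; ring

lemma width_le_one (k : ℕ) : width k ≤ 1 :=
  pow_le_one₀ (by norm_num) (by norm_num)

lemma weight_pos : ∀ k, 0 < weight k
  | 0 => one_pos
  | k + 1 => by have := weight_pos k; have := width_pos k; rw [weight]; positivity

lemma abs_center_sub_add_le {ν σ : List Bool} (h : ν <:+ σ) :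
    |center σ - center ν| + width σ.length / 2 ≤ width ν.length / 2 := by
  obtain ⟨μ, rfl⟩ := h
  induction μ with
  | nil => simp
  | cons b μ ih =>
    have hw := width_pos (μ ++ ν).length
    have hstep : |center (b :: (μ ++ ν)) - center (μ ++ ν)| = 3 / 8 * width (μ ++ ν).length := by
      cases b
      · rw [center, add_sub_cancel_left, abs_of_pos (by positivity)]
      · rw [center, sub_sub_cancel_left, abs_neg, abs_of_pos (by positivity)]
    have := abs_sub_le (center (b :: (μ ++ ν))) (center (μ ++ ν)) (center ν)
    rw [List.cons_append, List.length_cons, width_succ]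
    linarith

lemma center_mem_Ioo (σ : List Bool) : center σ ∈ Ioo (0 : ℚ) 1 := by
  have h := abs_center_sub_add_le (List.nil_suffix (l := σ))
  have := width_pos σ.length
  rw [List.length_nil, show width 0 = 1 from pow_zero _, center] at h
  have := abs_le.mp (show |center σ - 1 / 2| ≤ 1 / 2 - width σ.length / 2 by linarith)
  constructor <;> linarith


lemma penalty_pos (ρ : List Bool) (b : Bool) {t : ℚ} (ht : t ≤ 1) : 0 < penalty ρ b t := by
  have hw := weight_pos ρ.length
  have := (center_mem_Ioo ρ).1
  cases b
  · exact mul_pos hw (by linarith)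
  · exact hw

lemma penalty_le (ρ : List Bool) (b : Bool) {t : ℚ} (ht : 0 ≤ t) :
    penalty ρ b t ≤ 2 * weight ρ.length := by
  have := weight_pos ρ.length
  have := (center_mem_Ioo ρ).2
  cases b
  · rw [penalty, mul_comm 2]; gcongr; linarith
  · rw [penalty]; linarith

lemma line_cons_lt (b : Bool) (ρ : List Bool) {t : ℚ} (ht : t ≤ 1) : line (b :: ρ) t < line ρ t :=
  sub_lt_self _ (penalty_pos ρ b ht)

lemma line_le_of_isSuffix {ν σ : List Bool} (h : ν <:+ σ) {t : ℚ} (ht : t ≤ 1) :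
    line σ t ≤ line ν t := by
  obtain ⟨μ, rfl⟩ := h
  induction μ with
  | nil => rfl
  | cons b μ ih => exact (line_cons_lt b _ ht).le.trans ih

lemma line_sub_line_le {ν σ : List Bool} (h : ν <:+ σ) {t : ℚ} (ht : t ∈ Icc (0 : ℚ) 1) :
    line ν t - line σ t + 4 * weight σ.length ≤ 4 * weight ν.length := by
  obtain ⟨μ, rfl⟩ := h
  induction μ with
  | nil => simp
  | cons b μ ih =>
    have hpen := penalty_le (μ ++ ν) b ht.1
    have hw := weight_pos (μ ++ ν).length
    have : weight (μ ++ ν).length * width (μ ++ ν).length ≤ weight (μ ++ ν).length :=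
      mul_le_of_le_one_right hw.le (width_le_one _)
    rw [List.cons_append, line, List.length_cons, weight]
    linarith

lemma penalty_gap {b : Bool} {ρ σ : List Bool} (h : b :: ρ <:+ σ) :
    weight ρ.length * width ρ.length / 4 ≤ penalty ρ (!b) (center σ) - penalty ρ b (center σ) := by
  have hσ := abs_center_sub_add_le h
  rw [List.length_cons, width_succ] at hσ
  have hw := weight_pos ρ.length
  have hσ' := le_of_add_le_of_nonneg_left hσ (by positivity [width_pos σ.length])
  obtain ⟨hlo, hhi⟩ := abs_le.mp hσ'
  cases b
  · rw [center] at hlo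
    have : width ρ.length / 4 ≤ center σ - center ρ := by linarith
    simp only [penalty, Bool.not_false]
    nlinarith
  · rw [center] at hhi
    have : width ρ.length / 4 ≤ center ρ - center σ := by linarith
    simp only [penalty, Bool.not_true]
    nlinarith

lemma line_sibling_lt_line_center {c : Bool} {ρ σ : List Bool} (h : c :: ρ <:+ σ) :
    line ((!c) :: ρ) (center σ) < line σ (center σ) := by
  have hθ := center_mem_Ioo σ
  have hgap := penalty_gap h
  have htail := line_sub_line_le h ⟨hθ.1.le, hθ.2.le⟩
  have := weight_pos σ.length
  have := mul_pos (weight_pos ρ.length) (width_pos ρ.length)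
  rw [List.length_cons, weight] at htail
  simp only [line] at htail ⊢
  linarith

lemma line_lt_line_center {τ σ : List Bool} (h : ¬ τ <:+ σ) :
    line τ (center σ) < line σ (center σ) := by
  have hθ := (center_mem_Ioo σ).2.le
  induction τ with
  | nil => exact absurd List.nil_suffix h
  | cons b ρ ih =>
    by_cases hρ : ρ <:+ σ
    · obtain ⟨μ, rfl⟩ := hρ
      rcases List.eq_nil_or_concat μ with rfl | ⟨μ', c, rfl⟩
      · exact line_cons_lt b ρ hθ
      · have hc : c :: ρ <:+ μ'.concat c ++ ρ := ⟨μ', by simp⟩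
        obtain rfl : b = !c := by
          rcases Bool.eq_or_eq_not b c with rfl | hb
          · exact absurd hc h
          · exact hb
        exact line_sibling_lt_line_center hc
    · exact (line_cons_lt b ρ hθ).trans (ih hρ)

lemma line_affine (σ : List Bool) : ∃ a c : ℚ, ∀ t, line σ t = a * t + c := by
  induction σ with
  | nil => exact ⟨0, 0, fun t => by simp [line]⟩
  | cons b ρ ih =>
    obtain ⟨a, c, h⟩ := ih
    cases b
    · refine ⟨a + weight ρ.length, c - weight ρ.length * (1 + center ρ), fun t => ?_⟩
      simp only [line, penalty, h]; ring
    · exact ⟨a, c - weight ρ.length, fun t => by simp only [line, penalty, h]; ring⟩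

theorem smyth_iff_sup'_line_le {S T : Finset (List Bool)} (hS : S.Nonempty) (hT : T.Nonempty) :
    Smyth S T ↔ ∀ t ∈ Ioo (0 : ℚ) 1, S.sup' hS line t ≤ T.sup' hT line t := by
  simp only [Finset.sup'_apply]
  constructor
  · intro h t ht
    refine Finset.sup'_le _ _ fun σ hσ => ?_
    obtain ⟨τ, hτ, hτσ⟩ := h σ hσ
    exact (line_le_of_isSuffix hτσ ht.2.le).trans (T.le_sup' (line · t) hτ)
  · intro h
    by_contra hST
    obtain ⟨σ, hσ, hnot⟩ : ∃ σ ∈ S, ∀ τ ∈ T, ¬ τ <:+ σ := by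
      simpa [Smyth, Covers] using hST
    have hlt : T.sup' hT (line · (center σ)) < line σ (center σ) :=
      (Finset.sup'_lt_iff _).2 fun τ hτ => line_lt_line_center (hnot τ hτ)
    exact (h _ (center_mem_Ioo σ)).not_gt (hlt.trans_le (S.le_sup' (line · (center σ)) hσ))

lemma convexOn_line (σ : List Bool) : ConvexOn ℚ (Ioo 0 1) (line σ) := by
  obtain ⟨a, c, h⟩ := line_affine σ
  rw [show line σ = fun t => a * t + c from funext h]
  exact ((LinearMap.mulLeft ℚ a).convexOn (convex_Ioo 0 1)).add_const c

section Code

variable {P : Type*} [Preorder P] (e : ℕ → P)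

def IsFree (n : ℕ) (F : ℕ → Finset (List Bool)) (ν : List Bool) : Prop :=
  (∀ i < n, e n ≤ e i → Covers (F i) ν) ∧ ∀ i < n, Covers (F i) ν → ¬ e i ≤ e n

open Classical in
noncomputable def extension (n : ℕ) (F : ℕ → Finset (List Bool)) : Finset (List Bool) :=
  ((Finset.range n).filter (e · ≤ e n)).biUnion F ∪
    (((List.finite_length_eq Bool n).inter_of_left {ν | IsFree e n F ν}).image
      (List.cons false)).toFinset

lemma mem_extension {n : ℕ} {F : ℕ → Finset (List Bool)} {σ : List Bool} :
    σ ∈ extension e n F ↔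
      (∃ i < n, e i ≤ e n ∧ σ ∈ F i) ∨ ∃ ν, (ν.length = n ∧ IsFree e n F ν) ∧ false :: ν = σ := by
  simp [extension, and_assoc]

noncomputable def code (n : ℕ) : Finset (List Bool) :=
  extension e n fun i => if i < n then code i else ∅

lemma extension_congr {n : ℕ} {F G : ℕ → Finset (List Bool)} (h : ∀ i < n, F i = G i) :
    extension e n F = extension e n G := by
  have hfree : ∀ ν, IsFree e n F ν ↔ IsFree e n G ν := fun ν => by
    simp +contextual only [IsFree, h]
  ext σ
  simp only [mem_extension, hfree]
  exact or_congr_left (exists_congr fun i => and_congr_right fun hi => by rw [h i hi])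

lemma code_eq (n : ℕ) : code e n = extension e n (code e) := by
  rw [code]
  exact extension_congr e fun i hi => if_pos hi

lemma length_le_of_mem_code {n : ℕ} {σ : List Bool} (h : σ ∈ code e n) : σ.length ≤ n + 1 := by
  induction n using Nat.strong_induction_on generalizing σ with
  | _ n ih =>
    rw [code_eq, mem_extension] at h
    rcases h with ⟨i, hi, -, hσ⟩ | ⟨ν, ⟨hν, -⟩, rfl⟩
    · have := ih i hi hσ
      omega
    · simp [hν]

lemma covers_code_cons_iff {i : ℕ} {ν : List Bool} (hi : i < ν.length) (b : Bool) :
    Covers (code e i) (b :: ν) ↔ Covers (code e i) ν :=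
  covers_cons_iff (fun _ hτ => (length_le_of_mem_code e hτ).trans hi) b

lemma covers_code_cons_iff_self {n : ℕ} {ν : List Bool} (hν : ν.length = n) (b : Bool) :
    Covers (code e n) (b :: ν) ↔
      (∃ i < n, e i ≤ e n ∧ Covers (code e i) ν) ∨ (b = false ∧ IsFree e n (code e) ν) := by
  rw [code_eq]
  constructor
  · rintro ⟨τ, hτ, hτν⟩
    rcases (mem_extension e).1 hτ with ⟨i, hi, hle, hτi⟩ | ⟨μ, ⟨hμ, hfree⟩, rfl⟩
    · exact Or.inl ⟨i, hi, hle, (covers_code_cons_iff e (hν ▸ hi) b).1 ⟨τ, hτi, hτν⟩⟩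
    · obtain ⟨rfl, rfl⟩ := List.cons.inj (hτν.eq_of_length (by simp [hμ, hν]))
      exact Or.inr ⟨rfl, hfree⟩
  · rintro (⟨i, hi, hle, τ, hτ, hτν⟩ | ⟨rfl, hfree⟩)
    · exact ⟨τ, (mem_extension e).2 (Or.inl ⟨i, hi, hle, hτ⟩), hτν.trans (List.suffix_cons b ν)⟩
    · exact ⟨false :: ν, (mem_extension e).2 (Or.inr ⟨ν, ⟨hν, hfree⟩, rfl⟩), List.suffix_refl _⟩

theorem exists_covers_code_iff (n : ℕ) (K : Set ℕ)
    (hK : ∀ i < n, ∀ j < n, i ∈ K → e i ≤ e j → j ∈ K) :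
    ∃ ν : List Bool, ν.length = n ∧ ∀ i < n, Covers (code e i) ν ↔ i ∈ K := by
  induction n with
  | zero => exact ⟨[], rfl, fun i hi => absurd hi (Nat.not_lt_zero i)⟩
  | succ n ih =>
    obtain ⟨ν, hν, hcov⟩ := ih fun i hi j hj => hK i (by omega) j (by omega)
    suffices ∃ b, Covers (code e n) (b :: ν) ↔ n ∈ K by
      obtain ⟨b, hb⟩ := this
      refine ⟨b :: ν, by simp [hν], fun i hi => ?_⟩
      rcases Nat.lt_succ_iff_lt_or_eq.1 hi with hi | rfl
      · rw [covers_code_cons_iff e (hν ▸ hi), hcov i hi]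
      · exact hb
    simp only [covers_code_cons_iff_self e hν]
    by_cases hlow : ∃ i < n, e i ≤ e n ∧ i ∈ K
    · obtain ⟨i, hi, hle, hiK⟩ := hlow
      exact ⟨true, iff_of_true (Or.inl ⟨i, hi, hle, (hcov i hi).2 hiK⟩)
        (hK i (by omega) n (by omega) hiK hle)⟩
    push Not at hlow
    by_cases hn : n ∈ K
    · refine ⟨false, iff_of_true (Or.inr ⟨rfl, ?_, ?_⟩) hn⟩
      · exact fun i hi hle => (hcov i hi).2 (hK n (by omega) i (by omega) hn hle)
      · exact fun i hi hc hle => hlow i hi hle ((hcov i hi).1 hc)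
    · refine ⟨true, iff_of_false ?_ hn⟩
      rintro (⟨i, hi, hle, hc⟩ | ⟨h, -⟩)
      · exact hlow i hi hle ((hcov i hi).1 hc)
      · exact Bool.noConfusion h

lemma isFree_of_covers_iff {n : ℕ} {F : ℕ → Finset (List Bool)} {ν : List Bool}
    (hν : ∀ i < n, Covers (F i) ν ↔ e n ≤ e i) (h : ∀ i < n, e i ≤ e n → ¬ e n ≤ e i) :
    IsFree e n F ν :=
  ⟨fun i hi hle => (hν i hi).2 hle, fun i hi hc hle => h i hi hle ((hν i hi).1 hc)⟩

lemma exists_covers_code_iff_le (n : ℕ) :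
    ∃ ν : List Bool, ν.length = n ∧ ∀ i < n, Covers (code e i) ν ↔ e n ≤ e i :=
  exists_covers_code_iff e n {i | e n ≤ e i} fun _ _ _ _ hi hij => le_trans hi hij

lemma cons_false_mem_code {n : ℕ} {ν : List Bool} (hν : ν.length = n)
    (hfree : IsFree e n (code e) ν) : false :: ν ∈ code e n := by
  rw [code_eq, mem_extension]
  exact Or.inr ⟨ν, ⟨hν, hfree⟩, rfl⟩

lemma code_subset_code {i n : ℕ} (hi : i < n) (h : e i ≤ e n) : code e i ⊆ code e n := by
  intro σ hσ
  rw [code_eq, mem_extension]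
  exact Or.inl ⟨i, hi, h, hσ⟩

lemma code_nonempty (n : ℕ) : (code e n).Nonempty := by
  induction n using Nat.strong_induction_on with
  | _ n ih =>
    by_cases hlow : ∃ i < n, e i ≤ e n
    · obtain ⟨i, hi, hle⟩ := hlow
      exact (ih i hi).mono (code_subset_code e hi hle)
    · push Not at hlow
      obtain ⟨ν, hν, hcov⟩ := exists_covers_code_iff_le e n
      have hfree := isFree_of_covers_iff e hcov fun i hi hle => absurd hle (hlow i hi)
      exact ⟨_, cons_false_mem_code e hν hfree⟩

lemma smyth_code_of_ge {j n : ℕ} (hj : j < n) (h : e n ≤ e j)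
    (hord : ∀ i < n, e i ≤ e j → Smyth (code e i) (code e j)) : Smyth (code e n) (code e j) := by
  intro σ hσ
  rw [code_eq, mem_extension] at hσ
  rcases hσ with ⟨i, hi, hle, hσi⟩ | ⟨ν, ⟨hν, hfree⟩, rfl⟩
  · exact hord i hi (hle.trans h) σ hσi
  · exact (covers_code_cons_iff e (hν ▸ hj) false).2 (hfree.1 j hj h)

lemma not_smyth_code_of_not_ge {j n : ℕ} (hj : j < n) (h : ¬ e n ≤ e j)
    (hord : ∀ i < n, Smyth (code e i) (code e j) → e i ≤ e j) : ¬ Smyth (code e n) (code e j) := by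
  intro hs
  by_cases hlow : ∃ i < n, e i ≤ e n ∧ ¬ e i ≤ e j
  · obtain ⟨i, hi, hle, hij⟩ := hlow
    exact hij (hord i hi ((smyth_of_subset (code_subset_code e hi hle)).trans hs))
  push Not at hlow
  obtain ⟨ν, hν, hcov⟩ := exists_covers_code_iff_le e n
  have hfree := isFree_of_covers_iff e hcov fun i hi hle hge => h (hge.trans (hlow i hi hle))
  have hc := hs _ (cons_false_mem_code e hν hfree)
  rw [covers_code_cons_iff e (hν ▸ hj)] at hc
  exact h ((hcov j hj).1 hc)

lemma not_smyth_code_of_not_le {j n : ℕ} (hj : j < n) (h : ¬ e j ≤ e n) :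
    ¬ Smyth (code e j) (code e n) := by
  intro hs
  obtain ⟨ν, hν, hcov⟩ := exists_covers_code_iff e n {i | e j ≤ e i}
    fun _ _ _ _ hi hij => le_trans hi hij
  have hc := hs.covers ((covers_code_cons_iff e (hν ▸ hj) true).2 ((hcov j hj).2 le_rfl))
  rcases (covers_code_cons_iff_self e hν true).1 hc with ⟨i, hi, hle, hci⟩ | ⟨h', -⟩
  · exact h (((hcov i hi).1 hci).trans hle)
  · exact Bool.noConfusion h'

theorem le_iff_smyth_code (i j : ℕ) : e i ≤ e j ↔ Smyth (code e i) (code e j) := by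
  suffices ∀ n, ∀ i < n, ∀ j < n, e i ≤ e j ↔ Smyth (code e i) (code e j) from
    this (max i j + 1) i (by omega) j (by omega)
  intro n
  induction n with
  | zero => exact fun i hi => absurd hi (Nat.not_lt_zero i)
  | succ n ih =>
    intro i hi j hj
    rcases Nat.lt_succ_iff_lt_or_eq.1 hi with hi | rfl <;>
      rcases Nat.lt_succ_iff_lt_or_eq.1 hj with hj | rfl
    · exact ih i hi j hj
    · exact ⟨fun h => smyth_of_subset (code_subset_code e hi h),
        fun hs => by_contra fun h => not_smyth_code_of_not_le e hi h hs⟩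
    · exact ⟨fun h => smyth_code_of_ge e hj h fun k hk => (ih k hk j hj).1,
        fun hs => by_contra fun h =>
          not_smyth_code_of_not_ge e hj h (fun k hk => (ih k hk j hj).2) hs⟩
    · exact iff_of_true le_rfl (smyth_of_subset subset_rfl)

end Code

theorem exists_smyth_embedding (P : Type*) [Preorder P] [Countable P] :
    ∃ c : P → Finset (List Bool), (∀ x, (c x).Nonempty) ∧ ∀ x y, x ≤ y ↔ Smyth (c x) (c y) := by
  rcases isEmpty_or_nonempty P with hP | hP
  · exact ⟨isEmptyElim, isEmptyElim, isEmptyElim⟩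
  obtain ⟨e, he⟩ := exists_surjective_nat P
  refine ⟨fun x => code e (Function.surjInv he x), fun x => code_nonempty e _, fun x y => ?_⟩
  conv_lhs => rw [← Function.surjInv_eq he x, ← Function.surjInv_eq he y]
  exact le_iff_smyth_code e _ _

end PWL

/-- The pointwise order on convex piecewise linear functions on `(0,1) ∩ ℚ`
is universal: every countable partial order embeds into it. -/
theorem pwl_order_universal (P : Type) [PartialOrder P] [Countable P] :
    ∃ φ : P → ℚ → ℚ,
      (∀ x, IsPWL (φ x) ∧ ConvexOn ℚ (Set.Ioo (0 : ℚ) 1) (φ x)) ∧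
      (∀ x y, x ≤ y ↔ ∀ t ∈ Set.Ioo (0 : ℚ) 1, φ x t ≤ φ y t) := by
  obtain ⟨c, hne, hc⟩ := PWL.exists_smyth_embedding P
  refine ⟨fun x => (c x).sup' (hne x) PWL.line, fun x => ⟨?_, ?_⟩,
    fun x y => (hc x y).trans (PWL.smyth_iff_sup'_line_le _ _)⟩
  · exact isPWL_finset_sup' _ _ PWL.line_affine
  · exact Finset.sup'_induction _ _ (fun _ hf _ hg => hf.sup hg) fun σ _ => PWL.convexOn_line σ
end

section
/- The map Ψ' assigning to each partial order ([n], ≤_P) the set of vectors {v([m], ≤_{P_m}) : m ≤ n, m ≤_P n}, where v([m], ≤_{P_m}) is the 0-1 vector of length m with i-th entry 1 iff m ≤_P i, is an embedding: i ≤_P j iff Ψ'([i], ≤_{P_i}) ≤_TV Ψ'([j], ≤_{P_j}), and Ψ' is injective on {1,...,n}. -/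
/-- Truncated vector order on 0–1 vectors. -/
def vle (v v' : List Bool) : Prop :=
  v'.length ≤ v.length ∧ ∀ i < v'.length, v'.getD i false ≤ v.getD i false

/-- `V ≤_TV V'` iff every vector of `V` is below some vector of `V'`. -/
def leTV (V V' : Finset (List Bool)) : Prop :=
  ∀ v ∈ V, ∃ v' ∈ V', vle v v'

/-- `v([m], ≤_{P_m})`: the 0–1 vector of length `m` whose `i`-th entry is 1 iff
`m ≤_P i`. -/
def vecOf (r : ℕ → ℕ → Prop) [DecidableRel r] (m : ℕ) : List Bool :=
  List.ofFn (fun i : Fin m => decide (r m (i.1 + 1)))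

/-- `Ψ'([n], ≤_P) = { v([m], ≤_{P_m}) : m ≤ n, m ≤_P n }`. -/
def Psi' (r : ℕ → ℕ → Prop) [DecidableRel r] (n : ℕ) : Finset (List Bool) :=
  ((Finset.Icc 1 n).filter (fun m => r m n)).image (vecOf r)

lemma length_vecOf (r : ℕ → ℕ → Prop) [DecidableRel r] (m : ℕ) :
    (vecOf r m).length = m := by simp [vecOf]

lemma getD_vecOf (r : ℕ → ℕ → Prop) [DecidableRel r] {m k : ℕ} (h : k < m) :
    (vecOf r m).getD k false = decide (r m (k+1)) := by
  simp [vecOf, List.getD_eq_getElem?_getD, List.getElem?_ofFn, h]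

lemma vle_vecOf (r : ℕ → ℕ → Prop) [DecidableRel r] {a b : ℕ} :
    vle (vecOf r a) (vecOf r b) ↔ b ≤ a ∧ ∀ k < b, r b (k+1) → r a (k+1) := by
  constructor
  · rintro ⟨h1, h2⟩
    rw [length_vecOf, length_vecOf] at *
    refine ⟨h1, fun k hk hb => ?_⟩
    have := h2 k hk
    rw [getD_vecOf r hk, getD_vecOf r (lt_of_lt_of_le hk h1)] at this
    simp [hb] at this
    exact of_decide_eq_true (this rfl)
  · rintro ⟨h1, h2⟩
    refine ⟨by simp [length_vecOf, h1], fun k hk => ?_⟩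
    rw [length_vecOf] at hk
    rw [getD_vecOf r hk, getD_vecOf r (lt_of_lt_of_le hk h1)]
    by_cases hb : r b (k+1)
    · simp [hb, h2 k hk hb]
    · simp [hb]

lemma mem_Psi' (r : ℕ → ℕ → Prop) [DecidableRel r] {v : List Bool} {n : ℕ} :
    v ∈ Psi' r n ↔ ∃ m, (1 ≤ m ∧ m ≤ n) ∧ r m n ∧ vecOf r m = v := by
  simp [Psi', Finset.mem_image, Finset.mem_filter, Finset.mem_Icc, and_assoc]

lemma leTV_refl (V : Finset (List Bool)) : leTV V V :=
  fun v hv => ⟨v, hv, le_refl _, fun _ _ => le_refl _⟩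

/-- `Ψ'` is an embedding of the partial order `([n], ≤_P)` into `(TV, ≤_TV)`. -/
theorem psi'_embedding (n : ℕ) (r : ℕ → ℕ → Prop) [DecidableRel r]
    (hrefl : ∀ i ∈ Finset.Icc 1 n, r i i)
    (htrans : ∀ i ∈ Finset.Icc 1 n, ∀ j ∈ Finset.Icc 1 n, ∀ k ∈ Finset.Icc 1 n,
      r i j → r j k → r i k)
    (hanti : ∀ i ∈ Finset.Icc 1 n, ∀ j ∈ Finset.Icc 1 n, r i j → r j i → i = j) :
    ∀ i ∈ Finset.Icc 1 n, ∀ j ∈ Finset.Icc 1 n,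
      (r i j ↔ leTV (Psi' r i) (Psi' r j)) ∧ (Psi' r i = Psi' r j ↔ i = j) := by
  have fwd : ∀ i ∈ Finset.Icc 1 n, ∀ j ∈ Finset.Icc 1 n,
      r i j → leTV (Psi' r i) (Psi' r j) := by
    intro i hi j hj hij v hv
    obtain ⟨m, ⟨hm1, hmi⟩, hrmi, rfl⟩ := (mem_Psi' r).mp hv
    rw [Finset.mem_Icc] at hi hj
    have hmn : m ∈ Finset.Icc 1 n := Finset.mem_Icc.mpr ⟨hm1, le_trans hmi hi.2⟩
    have hin : i ∈ Finset.Icc 1 n := Finset.mem_Icc.mpr hi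
    have hjn : j ∈ Finset.Icc 1 n := Finset.mem_Icc.mpr hj
    have hrmj : r m j := htrans m hmn i hin j hjn hrmi hij
    by_cases hmj : m ≤ j
    · exact ⟨vecOf r m, (mem_Psi' r).mpr ⟨m, ⟨hm1, hmj⟩, hrmj, rfl⟩,
        (vle_vecOf r).mpr ⟨le_refl m, fun k _ h => h⟩⟩
    · push_neg at hmj
      refine ⟨vecOf r j, (mem_Psi' r).mpr ⟨j, ⟨hj.1, le_refl j⟩, hrefl j hjn, rfl⟩,
        (vle_vecOf r).mpr ⟨le_of_lt hmj, fun k hk hjk => ?_⟩⟩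
      have hkn : k + 1 ∈ Finset.Icc 1 n := Finset.mem_Icc.mpr ⟨by omega, by omega⟩
      exact htrans m hmn j hjn (k+1) hkn hrmj hjk
  have bwd : ∀ i ∈ Finset.Icc 1 n, ∀ j ∈ Finset.Icc 1 n,
      leTV (Psi' r i) (Psi' r j) → r i j := by
    intro i hi j hj h
    rw [Finset.mem_Icc] at hi hj
    have hin : i ∈ Finset.Icc 1 n := Finset.mem_Icc.mpr hi
    have hjn : j ∈ Finset.Icc 1 n := Finset.mem_Icc.mpr hj
    obtain ⟨v', hv', hvle⟩ := h (vecOf r i)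
      ((mem_Psi' r).mpr ⟨i, ⟨hi.1, le_refl i⟩, hrefl i hin, rfl⟩)
    obtain ⟨b, ⟨hb1, hbj⟩, hrbj, rfl⟩ := (mem_Psi' r).mp hv'
    obtain ⟨hbi, hdom⟩ := (vle_vecOf r).mp hvle
    have hbn : b ∈ Finset.Icc 1 n := Finset.mem_Icc.mpr ⟨hb1, le_trans hbj hj.2⟩
    have hrib : r i b := by
      have := hdom (b-1) (by omega)
      rw [Nat.sub_add_cancel hb1] at this
      exact this (hrefl b hbn)
    exact htrans i hin b hbn j hjn hrib hrbj
  intro i hi j hj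
  refine ⟨⟨fwd i hi j hj, bwd i hi j hj⟩, ⟨fun h => ?_, fun h => h ▸ rfl⟩⟩
  exact hanti i hi j hj (bwd i hi j hj (h ▸ leTV_refl _))
    (bwd j hj i hi (h ▸ leTV_refl _))
end

section
/- The class S of subsets of Z that are 2^n-periodic for some n ≥ 0, ordered by inclusion, is a universal partial order: every countable partial order embeds into (S, ⊆). -/
/-- A subset of `ℤ` which is `2^n`-periodic for some natural number `n`. -/
def IsPow2Periodic (S : Set ℤ) : Prop :=
  ∃ n : ℕ, ∀ x : ℤ, x ∈ S ↔ x + 2 ^ n ∈ S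

/-!
Reading an integer through its 2-adic digits `binaryDigit : ℤ → ℕ → Bool` (a map with dense
range), the preimage of a clopen subset of Cantor space depends only on finitely many digits,
hence is `2^n`-periodic. After enumerating `P`, the monotone maps `P → Bool` (indicators of upper
sets) form a closed subset of Cantor space, and a closed subset of Cantor space is a retract of
it, so they are the range of a continuous map `Φ` on Cantor space. Send `p` to the integers `x` with `Φ (binaryDigit x) p = true`. Monotonicity gives
`p ≤ q → φ p ⊆ φ q`; if `p ≰ q`, the indicator of the upper set of `p` lies in the open set
`{u | u p = true ∧ u q = false}`, and density produces an integer in `φ p \ φ q`.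
-/

open Set PiNat

attribute [local instance] PiNat.metricSpace in
theorem Continuous.exists_forall_mem_cylinder_eq {E Y : Type*} [TopologicalSpace E]
    [DiscreteTopology E] [CompactSpace E] [TopologicalSpace Y] [DiscreteTopology Y]
    {g : (ℕ → E) → Y} (hg : Continuous g) : ∃ n, ∀ x, ∀ y ∈ cylinder x n, g y = g x := by
  obtain ⟨δ, hδ, hball⟩ := lebesgue_number_lemma_of_metric (c := fun b : Y ↦ g ⁻¹' {b})
    isCompact_univ (fun b ↦ (isOpen_discrete _).preimage hg)
    (fun x _ ↦ mem_iUnion.2 ⟨g x, rfl⟩)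
  obtain ⟨n, hn⟩ := exists_pow_lt_of_lt_one hδ one_half_lt_one
  refine ⟨n, fun x y hy ↦ ?_⟩
  obtain ⟨b, hb⟩ := hball x trivial
  have hy' : y ∈ Metric.ball x δ := (mem_cylinder_iff_dist_le.1 hy).trans_lt hn
  exact (hb hy').trans (hb (Metric.mem_ball_self hδ)).symm

/-- The `i`-th binary digit of `x` in two's complement, i.e. its `i`-th 2-adic digit. -/
def binaryDigit (x : ℤ) (i : ℕ) : Bool := (x % 2 ^ (i + 1)).toNat.testBit i

theorem binaryDigit_add_two_pow_mem_cylinder (x : ℤ) (n : ℕ) :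
    binaryDigit (x + 2 ^ n) ∈ cylinder (binaryDigit x) n := by
  intro i hi
  have hdvd : (2 : ℤ) ^ (i + 1) ∣ 2 ^ n := pow_dvd_pow 2 hi
  simp only [binaryDigit, Int.add_emod x, Int.emod_eq_zero_of_dvd hdvd, add_zero, Int.emod_emod]

theorem binaryDigit_natCast (m i : ℕ) : binaryDigit m i = m.testBit i := by
  have : ((m : ℤ) % 2 ^ (i + 1)).toNat = m % 2 ^ (i + 1) := by norm_cast
  simp [binaryDigit, this, Nat.testBit_mod_two_pow]

theorem denseRange_binaryDigit : DenseRange binaryDigit := by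
  refine (isTopologicalBasis_cylinders _).dense_iff.2 ?_
  rintro _ ⟨y, n, rfl⟩ -
  refine ⟨binaryDigit (Nat.ofBits fun i : Fin n ↦ y i), fun i hi ↦ ?_, mem_range_self _⟩
  rw [binaryDigit_natCast, Nat.testBit_ofBits_lt _ _ hi]

theorem Continuous.exists_periodic_comp_binaryDigit {Y : Type*} [TopologicalSpace Y]
    [DiscreteTopology Y] {g : (ℕ → Bool) → Y} (hg : Continuous g) :
    ∃ n : ℕ, Function.Periodic (g ∘ binaryDigit) (2 ^ n) := by
  obtain ⟨n, hn⟩ := hg.exists_forall_mem_cylinder_eq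
  exact ⟨n, fun x ↦ hn _ _ (binaryDigit_add_two_pow_mem_cylinder x n)⟩

theorem exists_continuous_range_eq_setOf_monotone (P : Type*) [Preorder P] [Countable P] :
    ∃ Φ : (ℕ → Bool) → P → Bool, Continuous Φ ∧ range Φ = {u | Monotone u} := by
  obtain ⟨f, hf⟩ := Countable.exists_injective_nat P
  set X : Set (ℕ → Bool) := {v | Monotone (v ∘ f)}
  have hX : IsClosed X := by
    simp only [X, Monotone, ofPred_forall]
    exact isClosed_iInter fun p ↦ isClosed_iInter fun q ↦ isClosed_iInter fun _ ↦
      (isClosed_discrete {b : Bool × Bool | b.1 ≤ b.2}).preimage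
        (f := fun v : ℕ → Bool ↦ (v (f p), v (f q))) (by fun_prop)
  obtain ⟨ρ, hρ, hρX⟩ := exists_retractionCantorSet hX ⟨fun _ ↦ false, fun _ _ _ ↦ le_rfl⟩
  refine ⟨fun v ↦ ρ v ∘ f, by fun_prop, Subset.antisymm ?_ fun u hu ↦ ?_⟩
  · rintro _ ⟨v, rfl⟩
    exact hρX.subset (mem_range_self v)
  · have hext : Function.extend f u (fun _ ↦ false) ∘ f = u := Function.extend_comp hf u _
    obtain ⟨w, hw⟩ := hρX.superset (show _ ∈ X from hext ▸ hu)
    exact ⟨w, by simp only [hw, hext]⟩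

theorem le_iff_setOf_subset_of_range_eq_setOf_monotone {P X Y : Type*} [Preorder P]
    [TopologicalSpace X] {Φ : X → P → Bool} (hΦ : Continuous Φ)
    (hrange : range Φ = {u | Monotone u}) {d : Y → X} (hd : DenseRange d) (p q : P) :
    p ≤ q ↔ {y | Φ (d y) p = true} ⊆ {y | Φ (d y) q = true} := by
  classical
  refine ⟨fun hpq y hy ↦ ?_, fun hsub ↦ ?_⟩
  · have hmono : Monotone (Φ (d y)) := hrange.subset (mem_range_self _)
    exact Bool.le_iff_imp.1 (hmono hpq) hy
  · by_contra hpq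
    obtain ⟨w, hw⟩ : (fun r ↦ decide (p ≤ r)) ∈ range Φ :=
      hrange ▸ fun r s hrs ↦ by simpa [Bool.le_iff_imp] using (le_trans · hrs)
    have hopen : IsOpen {v | Φ v p = true ∧ Φ v q = false} :=
      (isOpen_discrete {b : Bool × Bool | b.1 = true ∧ b.2 = false}).preimage
        (f := fun v ↦ (Φ v p, Φ v q)) (by fun_prop)
    obtain ⟨y, hyp, hyq⟩ := hd.exists_mem_open hopen ⟨w, by simpa [hw] using hpq⟩
    simpa [hyq] using hsub hyp

/-- The class of `2^n`-periodic subsets of `ℤ` ordered by inclusion is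
universal: every countable partial order embeds into it. -/
theorem periodic_sets_universal (P : Type) [PartialOrder P] [Countable P] :
    ∃ φ : P → Set ℤ,
      (∀ x, IsPow2Periodic (φ x)) ∧ Function.Injective φ ∧
      (∀ x y, x ≤ y ↔ φ x ⊆ φ y) := by
  obtain ⟨Φ, hΦ, hrange⟩ := exists_continuous_range_eq_setOf_monotone P
  have hle := le_iff_setOf_subset_of_range_eq_setOf_monotone hΦ hrange denseRange_binaryDigit
  refine ⟨fun p ↦ {x | Φ (binaryDigit x) p = true}, fun p ↦ ?_,
    fun p q h ↦ le_antisymm ((hle p q).2 h.le) ((hle q p).2 h.ge), hle⟩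
  obtain ⟨n, hn⟩ := (show Continuous fun v ↦ Φ v p by fun_prop).exists_periodic_comp_binaryDigit
  exact ⟨n, fun x ↦ (congrArg (· = true) (hn x)).symm.to_iff⟩
end

section
/- The relation ≤_∈ on the class P_∈ is transitive: if A <_∈ B and B <_∈ C then A <_∈ C, where a witness of A <_∈ C can be found via witnesses of the two given inequalities. -/
/-- A countable-style model of hereditarily finite sets with one atom `♥`:
a type with a well-founded membership relation, extensionality for non-atoms,
and the operation `A ↦ A ∪ {♥}`. -/
structure HFModel where
  V : Type
  Mem : V → V → Prop
  heart : V
  addHeart : V → V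
  mem_addHeart : ∀ A z, Mem z (addHeart A) ↔ (Mem z A ∨ z = heart)
  heart_no_mem : ∀ z, ¬ Mem z heart
  ext : ∀ x y, x ≠ heart → y ≠ heart → (∀ z, Mem z x ↔ Mem z y) → x = y
  wf : WellFounded Mem

namespace HFModel

variable (M : HFModel)

/-- `a ∈ M_L x`, i.e. `a ∈ x` and `♥ ∉ a`. -/
def Left (x a : M.V) : Prop := M.Mem a x ∧ ¬ M.Mem M.heart a

/-- `b ∈ M_R x`, i.e. `b ∪ {♥} ∈ x` and `♥ ∉ b`. -/
def Right (x b : M.V) : Prop := M.Mem (M.addHeart b) x ∧ ¬ M.Mem M.heart b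

/-- The class `P_∈`: correctness, disjointness, ordering property, and
left/right completeness, hereditarily. -/
inductive IsP : (M : HFModel) → M.V → Prop
  | intro (M : HFModel) (x : M.V)
      (correct : ¬ M.Mem M.heart x)
      (hL : ∀ a, M.Left x a → IsP M a)
      (hR : ∀ b, M.Right x b → IsP M b)
      (disj : ∀ a, M.Left x a → ¬ M.Right x a)
      (ordering : ∀ a b, M.Left x a → M.Right x b →
        ∃ w, (w = a ∨ M.Right a w) ∧ (w = b ∨ M.Left b w))
      (leftComplete : ∀ a c, M.Left x a → M.Left a c → M.Left x c)
      (rightComplete : ∀ b c, M.Right x b → M.Right b c → M.Right x c) :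
      IsP M x

/-- `x <_∈ y` iff `({x} ∪ x_R) ∩ ({y} ∪ y_L) ≠ ∅`. -/
def ltE (x y : M.V) : Prop :=
  ∃ w, (w = x ∨ M.Right x w) ∧ (w = y ∨ M.Left y w)

/-- `x ≤_∈ y` iff `x <_∈ y` or `x = y`. -/
def leE (x y : M.V) : Prop := M.ltE x y ∨ x = y

end HFModel

/-- The relation `<_∈` is transitive on `P_∈`. -/
theorem ltE_trans (M : HFModel) (A B C : M.V)
    (hA : HFModel.IsP M A) (hB : HFModel.IsP M B) (hC : HFModel.IsP M C)
    (hAB : M.ltE A B) (hBC : M.ltE B C) : M.ltE A C := by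
  obtain ⟨_, _, _, _, _, ordB, _, _⟩ := hB
  obtain ⟨_, _, _, _, _, _, _, rcA⟩ := hA
  obtain ⟨_, _, _, _, _, _, lcC, _⟩ := hC
  obtain ⟨w1, h1a, h1b⟩ := hAB
  obtain ⟨w2, h2b, h2c⟩ := hBC
  rcases h1a with rfl | hAR
  · -- w1 = A
    rcases h1b with rfl | hBL
    · exact ⟨w2, h2b, h2c⟩
    · -- Left B A
      rcases h2b with rfl | hBR
      · -- w2 = B
        rcases h2c with rfl | hCL
        · exact ⟨w1, Or.inl rfl, Or.inr hBL⟩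
        · exact ⟨w1, Or.inl rfl, Or.inr (lcC _ _ hCL hBL)⟩
      · -- Right B w2
        rcases h2c with rfl | hCL
        · exact ordB _ _ hBL hBR
        · obtain ⟨w, hwa, hwb⟩ := ordB _ _ hBL hBR
          rcases hwb with rfl | hwL
          · exact ⟨w, hwa, Or.inr hCL⟩
          · exact ⟨w, hwa, Or.inr (lcC _ _ hCL hwL)⟩
  · -- Right A w1
    rcases h1b with rfl | hBL
    · -- w1 = B
      rcases h2b with rfl | hBR
      · rcases h2c with rfl | hCL
        · exact ⟨_, Or.inr hAR, Or.inl rfl⟩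
        · exact ⟨_, Or.inr hAR, Or.inr hCL⟩
      · exact ⟨w2, Or.inr (rcA _ _ hAR hBR), h2c⟩
    ·
      -- we need relation to C. Handle by cases on h2.
      rcases h2b with rfl | hBR
      · rcases h2c with rfl | hCL
        · exact ⟨w1, Or.inr hAR, Or.inr hBL⟩
        · exact ⟨w1, Or.inr hAR, Or.inr (lcC _ _ hCL hBL)⟩
      · obtain ⟨w, hwa, hwb⟩ := ordB _ _ hBL hBR
        have hAw : w = A ∨ M.Right A w := by
          rcases hwa with rfl | hwR
          · exact Or.inr hAR
          · exact Or.inr (rcA _ _ hAR hwR)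
        rcases h2c with rfl | hCL
        · exact ⟨w, hAw, hwb⟩
        · rcases hwb with rfl | hwL
          · exact ⟨w, hAw, Or.inr hCL⟩
          · exact ⟨w, hAw, Or.inr (lcC _ _ hCL hwL)⟩
end
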